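/- arXiv:2207.00851 — 5 statements merged into one kernel-verified Lean document; each statement's English description precedes it below -/
import Mathlib

section
/- If the left action ▷ of V on D is functionally complete (i.e. for every function ζ : V(I,Γ) → D(X,Y) there is a unique morphism f : Γ ▷ X → Y such that f ∘ (γ ▷ X) ∘ λ⁻¹_X = ζ(γ) for all points γ : I → Γ), then every functor F : C → D has a unique strength, and every natural transformation between strong functors C → D is strong. -/
open CategoryTheory MonoidalCategory

universe v₁ v₂ v₃ u₁ u₂ u₃

/-- A left action of a monoidal category `V` on a category `C`. -/
structure LeftAction (V : Type u₁) [Category.{v₁} V] [MonoidalCategory V]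
    (C : Type u₂) [Category.{v₂} C] where
  F : V ⥤ C ⥤ C
  lam : ∀ X : C, (F.obj (𝟙_ V)).obj X ≅ X
  lam_natural : ∀ {X Y : C} (f : X ⟶ Y),
    (F.obj (𝟙_ V)).map f ≫ (lam Y).hom = (lam X).hom ≫ f
  assoc : ∀ (Γ' Γ : V) (X : C),
    (F.obj (Γ' ⊗ Γ)).obj X ≅ (F.obj Γ').obj ((F.obj Γ).obj X)
  assoc_natural : ∀ {Γ' Δ' Γ Δ : V} (u : Γ' ⟶ Δ') (v : Γ ⟶ Δ) {X Y : C} (f : X ⟶ Y),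
    (F.map (u ⊗ₘ v)).app X ≫ (F.obj (Δ' ⊗ Δ)).map f ≫ (assoc Δ' Δ Y).hom
      = (assoc Γ' Γ X).hom ≫ (F.map u).app ((F.obj Γ).obj X)
          ≫ (F.obj Δ').map ((F.map v).app X ≫ (F.obj Δ).map f)
  triangle : ∀ (Γ : V) (X : C),
    (F.map (ρ_ Γ).inv).app X ≫ (assoc Γ (𝟙_ V) X).hom ≫ (F.obj Γ).map (lam X).hom = 𝟙 _
  unit_assoc : ∀ (Γ : V) (X : C),
    (assoc (𝟙_ V) Γ X).hom ≫ (lam ((F.obj Γ).obj X)).hom = (F.map (λ_ Γ).hom).app X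
  pentagon : ∀ (Γ₁ Γ₂ Γ₃ : V) (X : C),
    (F.map (α_ Γ₁ Γ₂ Γ₃).hom).app X ≫ (assoc Γ₁ (Γ₂ ⊗ Γ₃) X).hom
        ≫ (F.obj Γ₁).map (assoc Γ₂ Γ₃ X).hom
      = (assoc (Γ₁ ⊗ Γ₂) Γ₃ X).hom ≫ (assoc Γ₁ Γ₂ ((F.obj Γ₃).obj X)).hom

namespace LeftAction

variable {V : Type u₁} [Category.{v₁} V] [MonoidalCategory V]
variable {C : Type u₂} [Category.{v₂} C] {D : Type u₃} [Category.{v₃} D]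

/-- `a.act Γ X` is the action of `Γ` on an object `X`, written `Γ ▷ X` in the paper. -/
abbrev act (a : LeftAction V C) (Γ : V) (X : C) : C := (a.F.obj Γ).obj X

/-- The action of `Γ` on a morphism, `Γ ▷ f`. -/
abbrev actMap (a : LeftAction V C) (Γ : V) {X Y : C} (f : X ⟶ Y) :
    a.act Γ X ⟶ a.act Γ Y := (a.F.obj Γ).map f

/-- The action of a morphism of `V` on an object, `u ▷ X`. -/
abbrev actHom (a : LeftAction V C) {Γ Δ : V} (u : Γ ⟶ Δ) (X : C) :
    a.act Γ X ⟶ a.act Δ X := (a.F.map u).app X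

/-- Applying a morphism `f : Γ ▷ X ⟶ Y` to a point `γ : I ⟶ Γ`,
written `f⁻(γ)` in the paper. -/
def papp (a : LeftAction V C) {Γ : V} {X Y : C}
    (f : a.act Γ X ⟶ Y) (γ : 𝟙_ V ⟶ Γ) : X ⟶ Y :=
  (a.lam X).inv ≫ a.actHom γ X ≫ f

end LeftAction

/-- A strength for a functor `F : C ⥤ D`, with respect to left actions of `V`
on `C` and on `D`. -/
structure Strength {V : Type u₁} [Category.{v₁} V] [MonoidalCategory V]
    {C : Type u₂} [Category.{v₂} C] {D : Type u₃} [Category.{v₃} D]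
    (a : LeftAction V C) (b : LeftAction V D) (F : C ⥤ D) where
  str : ∀ (Γ : V) (X : C), b.act Γ (F.obj X) ⟶ F.obj (a.act Γ X)
  natural_fst : ∀ {Γ Δ : V} (u : Γ ⟶ Δ) (X : C),
    b.actHom u (F.obj X) ≫ str Δ X = str Γ X ≫ F.map (a.actHom u X)
  natural_snd : ∀ (Γ : V) {X Y : C} (f : X ⟶ Y),
    b.actMap Γ (F.map f) ≫ str Γ Y = str Γ X ≫ F.map (a.actMap Γ f)
  str_unit : ∀ X : C, str (𝟙_ V) X ≫ F.map (a.lam X).hom = (b.lam (F.obj X)).hom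
  str_assoc : ∀ (Γ' Γ : V) (X : C),
    (b.assoc Γ' Γ (F.obj X)).hom ≫ b.actMap Γ' (str Γ X) ≫ str Γ' (a.act Γ X)
      = str (Γ' ⊗ Γ) X ≫ F.map (a.assoc Γ' Γ X).hom

/-- A strong functor structure on an assignment of objects `obj : C → D` :
operations `F⟨Γ⟩` sending `f : Γ ▷ X ⟶ Y` to `F⟨Γ⟩ f : Γ ▷ F X ⟶ F Y`,
natural in `Γ` and compatible with the unitors and associators. -/
structure StrongFunctorStr {V : Type u₁} [Category.{v₁} V] [MonoidalCategory V]
    {C : Type u₂} [Category.{v₂} C] {D : Type u₃} [Category.{v₃} D]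
    (a : LeftAction V C) (b : LeftAction V D) (obj : C → D) where
  smap : ∀ {Γ : V} {X Y : C}, (a.act Γ X ⟶ Y) → (b.act Γ (obj X) ⟶ obj Y)
  natural : ∀ {Γ Δ : V} (u : Γ ⟶ Δ) {X Y : C} (f : a.act Δ X ⟶ Y),
    smap (a.actHom u X ≫ f) = b.actHom u (obj X) ≫ smap f
  unit : ∀ X : C, smap (a.lam X).hom = (b.lam (obj X)).hom
  comp : ∀ {Γ' Γ : V} {X Y Z : C} (f : a.act Γ X ⟶ Y) (g : a.act Γ' Y ⟶ Z),
    smap ((a.assoc Γ' Γ X).hom ≫ a.actMap Γ' f ≫ g)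
      = (b.assoc Γ' Γ (obj X)).hom ≫ b.actMap Γ' (smap f) ≫ smap g

/-- The strong-naturality condition for `τ : F ⟶ G` with respect to strengths
`sF`, `sG` : `τ_Y ∘ F⟨Γ⟩f = G⟨Γ⟩f ∘ (Γ ▷ τ_X)`, where `F⟨Γ⟩f = F f ∘ str`. -/
def IsStrongNatTrans {V : Type u₁} [Category.{v₁} V] [MonoidalCategory V]
    {C : Type u₂} [Category.{v₂} C] {D : Type u₃} [Category.{v₃} D]
    {a : LeftAction V C} {b : LeftAction V D} {F G : C ⥤ D}
    (sF : Strength a b F) (sG : Strength a b G) (τ : F ⟶ G) : Prop :=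
  ∀ (Γ : V) {X Y : C} (f : a.act Γ X ⟶ Y),
    (sF.str Γ X ≫ F.map f) ≫ τ.app Y = b.actMap Γ (τ.app X) ≫ (sG.str Γ X ≫ G.map f)

/-- Functional completeness of an action: for every function
`ζ : V(I,Γ) → D(X,Y)` there is a unique `f : Γ ▷ X ⟶ Y` whose application to
points is `ζ`. -/
def LeftAction.FunctionallyComplete {V : Type u₁} [Category.{v₁} V]
    [MonoidalCategory V] {D : Type u₃} [Category.{v₃} D]
    (b : LeftAction V D) : Prop :=
  ∀ (Γ : V) (X Y : D) (ζ : (𝟙_ V ⟶ Γ) → (X ⟶ Y)),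
    ∃! f : b.act Γ X ⟶ Y, ∀ γ : 𝟙_ V ⟶ Γ, b.papp f γ = ζ γ

/-!
By functional completeness a morphism `Γ ▷ X ⟶ Y` of `D` is determined by its restrictions
`(γ ▷ X) ∘ λ⁻¹_X` along the points `γ : I ⟶ Γ`. The unit axiom and naturality in `Γ` force
every strength to restrict to `str ∘ (γ ▷ F X) ∘ λ⁻¹ = F((γ ▷ X) ∘ λ⁻¹)`, which gives uniqueness
and strong naturality. Conversely, functional completeness lets us define `str` by this equation,
and each strength axiom is then checked pointwise.
-/

namespace LeftAction

variable {V : Type u₁} [Category.{v₁} V] [MonoidalCategory V]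
variable {C : Type u₂} [Category.{v₂} C] {D : Type u₃} [Category.{v₃} D]

section Points

variable (a : LeftAction V C)

def pointMap {Γ : V} (γ : 𝟙_ V ⟶ Γ) (X : C) : X ⟶ a.act Γ X :=
  (a.lam X).inv ≫ a.actHom γ X

variable {a}

theorem papp_eq_pointMap_comp {Γ : V} {X Y : C} (f : a.act Γ X ⟶ Y) (γ : 𝟙_ V ⟶ Γ) :
    a.papp f γ = a.pointMap γ X ≫ f := by
  simp only [papp, pointMap, Category.assoc]

theorem pointMap_id (X : C) : a.pointMap (𝟙 (𝟙_ V)) X = (a.lam X).inv := by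
  simp only [pointMap, actHom, a.F.map_id, NatTrans.id_app, Category.comp_id]

theorem pointMap_comp_actHom {Γ Δ : V} (γ : 𝟙_ V ⟶ Γ) (u : Γ ⟶ Δ) (X : C) :
    a.pointMap γ X ≫ a.actHom u X = a.pointMap (γ ≫ u) X := by
  simp only [pointMap, actHom, a.F.map_comp, NatTrans.comp_app, Category.assoc]

theorem pointMap_naturality {Γ : V} (γ : 𝟙_ V ⟶ Γ) {X Y : C} (f : X ⟶ Y) :
    f ≫ a.pointMap γ Y = a.pointMap γ X ≫ a.actMap Γ f := by
  have lam_inv_naturality : f ≫ (a.lam Y).inv = (a.lam X).inv ≫ a.actMap (𝟙_ V) f := by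
    rw [Iso.comp_inv_eq, Category.assoc, a.lam_natural, Iso.inv_hom_id_assoc]
  simp only [pointMap, actHom, actMap, ← Category.assoc, lam_inv_naturality]
  simp only [Category.assoc, (a.F.map γ).naturality]

theorem pointMap_comp_assoc_inv {Γ' : V} (Γ : V) (γ' : 𝟙_ V ⟶ Γ') (X : C) :
    a.pointMap γ' (a.act Γ X) ≫ (a.assoc Γ' Γ X).inv
      = a.actHom ((λ_ Γ).inv ≫ (γ' ⊗ₘ 𝟙 Γ)) X := by
  have assoc_natural := a.assoc_natural γ' (𝟙 Γ) (𝟙 X)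
  simp only [CategoryTheory.Functor.map_id, NatTrans.id_app, Category.comp_id,
    Category.id_comp] at assoc_natural
  have assoc_unit : (a.assoc (𝟙_ V) Γ X).hom
      = (a.F.map (λ_ Γ).hom).app X ≫ (a.lam (a.act Γ X)).inv := by
    rw [← a.unit_assoc Γ X, Category.assoc, Iso.hom_inv_id, Category.comp_id]
  rw [Iso.comp_inv_eq, actHom, a.F.map_comp, NatTrans.comp_app, Category.assoc,
    assoc_natural, assoc_unit, pointMap, ← Category.assoc, ← Category.assoc,
    ← NatTrans.comp_app, ← a.F.map_comp, Iso.inv_hom_id, a.F.map_id, NatTrans.id_app,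
    Category.id_comp]

end Points

namespace FunctionallyComplete

variable {b : LeftAction V D} (hb : b.FunctionallyComplete)
include hb

theorem hom_ext {Γ : V} {X Y : D} {f g : b.act Γ X ⟶ Y}
    (h : ∀ γ : 𝟙_ V ⟶ Γ, b.pointMap γ X ≫ f = b.pointMap γ X ≫ g) : f = g :=
  (hb Γ X Y fun γ => b.papp g γ).unique
    (fun γ => by simp only [papp_eq_pointMap_comp, h]) fun _ => rfl

noncomputable def lift {Γ : V} {X Y : D} (ζ : (𝟙_ V ⟶ Γ) → (X ⟶ Y)) : b.act Γ X ⟶ Y :=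
  (hb Γ X Y ζ).exists.choose

theorem pointMap_comp_lift {Γ : V} {X Y : D} (ζ : (𝟙_ V ⟶ Γ) → (X ⟶ Y)) (γ : 𝟙_ V ⟶ Γ) :
    b.pointMap γ X ≫ hb.lift ζ = ζ γ := by
  rw [← papp_eq_pointMap_comp]
  exact (hb Γ X Y ζ).exists.choose_spec γ

theorem actHom_endo_unit (γ : 𝟙_ V ⟶ 𝟙_ V) (X : D) : b.actHom γ X = 𝟙 _ := by
  have lift_eq : hb.lift (fun _ => 𝟙 X) = (b.lam X).hom := by
    have restriction_id := hb.pointMap_comp_lift (fun _ => 𝟙 X) (𝟙 _)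
    rw [pointMap_id, Iso.inv_comp_eq, Category.comp_id] at restriction_id
    exact restriction_id
  have restriction_γ := hb.pointMap_comp_lift (fun _ => 𝟙 X) γ
  rw [lift_eq, pointMap, Category.assoc, Iso.inv_comp_eq, Category.comp_id,
    ← Iso.eq_comp_inv, Iso.hom_inv_id] at restriction_γ
  exact restriction_γ

-- Every endomorphism of `I` acts trivially, so restrictions along points of `I` cannot tell
-- them apart.
theorem endo_unit_eq_id_or_eq (γ : 𝟙_ V ⟶ 𝟙_ V) {X Y : D} (g h : X ⟶ Y) :
    γ = 𝟙 _ ∨ g = h := by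
  classical
  obtain ⟨f, hf, -⟩ := hb (𝟙_ V) X Y fun δ => if δ = 𝟙 _ then g else h
  have restriction_eq (δ : 𝟙_ V ⟶ 𝟙_ V) : b.papp f δ = (b.lam X).inv ≫ f := by
    rw [papp, hb.actHom_endo_unit, Category.id_comp]
  have hg := hf (𝟙 _)
  have hγ := hf γ
  rw [restriction_eq, if_pos rfl] at hg
  rw [restriction_eq, hg] at hγ
  by_cases hγid : γ = 𝟙 _
  · exact .inl hγid
  · rw [if_neg hγid] at hγ
    exact .inr hγ

end FunctionallyComplete

end LeftAction

open LeftAction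

section Strengths

variable {V : Type u₁} [Category.{v₁} V] [MonoidalCategory V]
variable {C : Type u₂} [Category.{v₂} C] {D : Type u₃} [Category.{v₃} D]
variable {a : LeftAction V C} {b : LeftAction V D}

namespace Strength

theorem ext {F : C ⥤ D} {s t : Strength a b F} (h : s.str = t.str) : s = t := by
  cases s; cases t; cases h; rfl

theorem pointMap_comp_str {F : C ⥤ D} (s : Strength a b F) {Γ : V} (γ : 𝟙_ V ⟶ Γ) (X : C) :
    b.pointMap γ (F.obj X) ≫ s.str Γ X = F.map (a.pointMap γ X) := by
  have str_unit : s.str (𝟙_ V) X = (b.lam (F.obj X)).hom ≫ F.map (a.lam X).inv := by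
    rw [← s.str_unit, Category.assoc, ← F.map_comp, Iso.hom_inv_id, F.map_id,
      Category.comp_id]
  simp only [pointMap, Category.assoc, s.natural_fst, str_unit, Iso.inv_hom_id_assoc,
    ← F.map_comp]

end Strength

namespace LeftAction.FunctionallyComplete

variable (hb : b.FunctionallyComplete)
include hb

theorem strength_eq {F : C ⥤ D} (s t : Strength a b F) : s = t :=
  Strength.ext <| funext fun Γ => funext fun X => hb.hom_ext fun γ => by
    rw [s.pointMap_comp_str, t.pointMap_comp_str]

theorem isStrongNatTrans {F G : C ⥤ D} (sF : Strength a b F) (sG : Strength a b G)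
    (τ : F ⟶ G) : IsStrongNatTrans sF sG τ := by
  intro Γ X Y f
  refine hb.hom_ext fun γ => ?_
  calc b.pointMap γ (F.obj X) ≫ (sF.str Γ X ≫ F.map f) ≫ τ.app Y
      = F.map (a.pointMap γ X ≫ f) ≫ τ.app Y := by
        rw [← Category.assoc, ← Category.assoc, sF.pointMap_comp_str, F.map_comp]
    _ = τ.app X ≫ G.map (a.pointMap γ X ≫ f) := τ.naturality _
    _ = b.pointMap γ (F.obj X) ≫ b.actMap Γ (τ.app X) ≫ sG.str Γ X ≫ G.map f := by
        rw [← Category.assoc, ← pointMap_naturality, Category.assoc,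
          ← Category.assoc (b.pointMap γ _), sG.pointMap_comp_str, G.map_comp]

variable (a) in
noncomputable def str (F : C ⥤ D) (Γ : V) (X : C) : b.act Γ (F.obj X) ⟶ F.obj (a.act Γ X) :=
  hb.lift fun γ => F.map (a.pointMap γ X)

theorem pointMap_comp_str (F : C ⥤ D) {Γ : V} (γ : 𝟙_ V ⟶ Γ) (X : C) :
    b.pointMap γ (F.obj X) ≫ hb.str a F Γ X = F.map (a.pointMap γ X) :=
  hb.pointMap_comp_lift _ γ

theorem str_natural_fst (F : C ⥤ D) {Γ Δ : V} (u : Γ ⟶ Δ) (X : C) :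
    b.actHom u (F.obj X) ≫ hb.str a F Δ X = hb.str a F Γ X ≫ F.map (a.actHom u X) :=
  hb.hom_ext fun γ => by
    rw [← Category.assoc, pointMap_comp_actHom, pointMap_comp_str, ← Category.assoc,
      pointMap_comp_str, ← F.map_comp, pointMap_comp_actHom]

variable (a) in
noncomputable def strength (F : C ⥤ D) : Strength a b F where
  str := hb.str a F
  natural_fst := hb.str_natural_fst F
  natural_snd Γ X Y f := hb.hom_ext fun γ => by
    rw [← Category.assoc, ← pointMap_naturality, Category.assoc, pointMap_comp_str,
      ← Category.assoc, pointMap_comp_str, ← F.map_comp, ← F.map_comp, pointMap_naturality]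
  str_unit X := hb.hom_ext fun γ => by
    rw [← Category.assoc, pointMap_comp_str, ← F.map_comp]
    rcases hb.endo_unit_eq_id_or_eq γ (F.map (a.pointMap γ X ≫ (a.lam X).hom))
      (b.pointMap γ (F.obj X) ≫ (b.lam (F.obj X)).hom) with rfl | h
    · rw [pointMap_id, pointMap_id, Iso.inv_hom_id, Iso.inv_hom_id, F.map_id]
    · exact h
  str_assoc Γ' Γ X := by
    rw [← Iso.eq_inv_comp]
    refine hb.hom_ext fun γ' => ?_
    rw [← Category.assoc, ← pointMap_naturality, Category.assoc, pointMap_comp_str,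
      ← Category.assoc, pointMap_comp_assoc_inv, ← Category.assoc,
      str_natural_fst, Category.assoc, ← F.map_comp, ← pointMap_comp_assoc_inv,
      Category.assoc, Iso.inv_hom_id, Category.comp_id]

end LeftAction.FunctionallyComplete

end Strengths

/-- if the action of `V` on `D` is functionally complete, then
every functor `F : C ⥤ D` has a strength, this strength is unique, and every
natural transformation between strong functors `C ⥤ D` is strong. -/
theorem statement4 {V : Type u₁} [Category.{v₁} V] [MonoidalCategory V]
    {C : Type u₂} [Category.{v₂} C] {D : Type u₃} [Category.{v₃} D]
    (a : LeftAction V C) (b : LeftAction V D)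
    (hb : b.FunctionallyComplete) :
    (∀ F : C ⥤ D, Nonempty (Strength a b F)) ∧
    (∀ (F : C ⥤ D) (s t : Strength a b F), s = t) ∧
    (∀ (F G : C ⥤ D) (sF : Strength a b F) (sG : Strength a b G) (τ : F ⟶ G),
      IsStrongNatTrans sF sG τ) :=
  ⟨fun F => ⟨hb.strength a F⟩, fun _ => hb.strength_eq, fun _ _ => hb.isStrongNatTrans⟩
end

section
/- Suppose the left action ▷ of V on D is well-pointed, i.e. the map f ↦ f⁻ (applying morphisms Γ ▷ X → Y to points γ : I → Γ) is injective. Then a functor F : C → D admits a strength if and only if for every Γ, X there exists a morphism str_{Γ,X} : Γ ▷ FX → F(Γ ▷ X) satisfying str_{Γ,X}⁻(γ) = F((id_{Γ▷X})⁻(γ)) for all points γ : I → Γ; in that case str is the unique strength for F. Moreover, every natural transformation between strong functors C → D is then automatically strong. -/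
open CategoryTheory MonoidalCategory

universe v₁ v₂ v₃ u₁ u₂ u₃

/-- Well-pointedness of an action: application to points is injective. -/
def LeftAction.WellPointed {V : Type u₁} [Category.{v₁} V]
    [MonoidalCategory V] {D : Type u₃} [Category.{v₃} D]
    (b : LeftAction V D) : Prop :=
  ∀ (Γ : V) (X Y : D) (f g : b.act Γ X ⟶ Y),
    (∀ γ : 𝟙_ V ⟶ Γ, b.papp f γ = b.papp g γ) → f = g

/-!
In a well-pointed action a morphism `Γ ▷ X ⟶ Y` is determined by its values `f⁻(γ)` at the
points `γ : 𝟙_ V ⟶ Γ`. The unit axiom and naturality in `Γ` force every strength to take the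
values `str⁻(γ) = F((𝟙_{Γ ▷ X})⁻(γ))`, so strengths are unique, and conversely each axiom of a
strength holds for a family with these values because both sides of it agree at every point.
Strong naturality of `τ : F ⟶ G` likewise reduces, pointwise, to ordinary naturality of `τ`.
-/

section

variable {V : Type u₁} [Category.{v₁} V] [MonoidalCategory V]
variable {C : Type u₂} [Category.{v₂} C] {D : Type u₃} [Category.{v₃} D]

namespace LeftAction

variable (a : LeftAction V C)

@[simp]
lemma actHom_comp {Γ Δ Θ : V} (u : Γ ⟶ Δ) (v : Δ ⟶ Θ) (X : C) :
    a.actHom (u ≫ v) X = a.actHom u X ≫ a.actHom v X := by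
  simp only [actHom, CategoryTheory.Functor.map_comp, NatTrans.comp_app]

lemma papp_id_point {X Y : C} (f : a.act (𝟙_ V) X ⟶ Y) :
    a.papp f (𝟙 _) = (a.lam X).inv ≫ f := by
  simp [papp, actHom]

lemma papp_comp {Γ : V} {X Y Z : C} (f : a.act Γ X ⟶ Y) (g : Y ⟶ Z) (γ : 𝟙_ V ⟶ Γ) :
    a.papp (f ≫ g) γ = a.papp f γ ≫ g := by
  simp [papp]

lemma papp_actHom_comp {Γ Δ : V} (u : Γ ⟶ Δ) {X Y : C} (f : a.act Δ X ⟶ Y)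
    (γ : 𝟙_ V ⟶ Γ) : a.papp (a.actHom u X ≫ f) γ = a.papp f (γ ≫ u) := by
  simp [papp]

lemma papp_actMap_comp {Γ : V} {X Y Z : C} (f : X ⟶ Y) (g : a.act Γ Y ⟶ Z)
    (γ : 𝟙_ V ⟶ Γ) : a.papp (a.actMap Γ f ≫ g) γ = f ≫ a.papp g γ := by
  have hγ : a.actHom γ X ≫ a.actMap Γ f = a.actMap (𝟙_ V) f ≫ a.actHom γ Y :=
    ((a.F.map γ).naturality f).symm
  have hlam : (a.lam X).inv ≫ a.actMap (𝟙_ V) f = f ≫ (a.lam Y).inv := by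
    rw [Iso.inv_comp_eq, ← Category.assoc, Iso.eq_comp_inv, a.lam_natural]
  simp only [papp, reassoc_of% hγ, reassoc_of% hlam]

/-- A point of `Γ'` acting on `Γ ▷ X` is the point `λ⁻¹ ≫ (γ' ▷ Γ)` of `Γ' ⊗ Γ` acting on `X`,
transported along the associator. -/
lemma lam_inv_comp_actHom {Γ' : V} (γ' : 𝟙_ V ⟶ Γ') (Γ : V) (X : C) :
    (a.lam (a.act Γ X)).inv ≫ a.actHom γ' (a.act Γ X)
      = a.actHom ((λ_ Γ).inv ≫ γ' ▷ Γ) X ≫ (a.assoc Γ' Γ X).hom := by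
  have hnat := a.assoc_natural γ' (𝟙 Γ) (𝟙 X)
  simp only [CategoryTheory.Functor.map_id, Category.id_comp, Category.comp_id, NatTrans.id_app,
    tensorHom_id] at hnat
  have hunit : (a.assoc (𝟙_ V) Γ X).hom = a.actHom (λ_ Γ).hom X ≫ (a.lam (a.act Γ X)).inv := by
    rw [Iso.eq_comp_inv]
    exact a.unit_assoc Γ X
  have hunitor : a.actHom (λ_ Γ).inv X ≫ a.actHom (λ_ Γ).hom X = 𝟙 _ := by
    rw [← actHom_comp, Iso.inv_hom_id]
    simp [actHom]
  rw [actHom_comp, Category.assoc, hnat, hunit]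
  simp only [Category.assoc, reassoc_of% hunitor]

end LeftAction

open LeftAction

variable {a : LeftAction V C} {b : LeftAction V D}

def IsPointwiseStrength (F : C ⥤ D)
    (str : ∀ (Γ : V) (X : C), b.act Γ (F.obj X) ⟶ F.obj (a.act Γ X)) : Prop :=
  ∀ (Γ : V) (X : C) (γ : 𝟙_ V ⟶ Γ), b.papp (str Γ X) γ = F.map (a.papp (𝟙 (a.act Γ X)) γ)

namespace Strength

variable {F G : C ⥤ D}

lemma str_unit_eq (s : Strength a b F) (X : C) :
    s.str (𝟙_ V) X = (b.lam (F.obj X)).hom ≫ F.map (a.lam X).inv := by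
  rw [← s.str_unit X, Category.assoc, ← F.map_comp, Iso.hom_inv_id, F.map_id, Category.comp_id]

theorem isPointwiseStrength (s : Strength a b F) : IsPointwiseStrength F s.str := by
  intro Γ X γ
  simp only [papp, Category.assoc, s.natural_fst γ X, s.str_unit_eq, Iso.inv_hom_id_assoc,
    ← F.map_comp, Category.comp_id]

theorem ext_of_wellPointed (hb : b.WellPointed) (s t : Strength a b F) : s = t := by
  have hstr : s.str = t.str := by
    funext Γ X
    exact hb _ _ _ _ _ fun γ => by rw [s.isPointwiseStrength, t.isPointwiseStrength]
  cases s
  cases t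
  cases hstr
  rfl

theorem isStrongNatTrans_of_wellPointed (hb : b.WellPointed) (sF : Strength a b F)
    (sG : Strength a b G) (τ : F ⟶ G) : IsStrongNatTrans sF sG τ := by
  intro Γ X Y f
  refine hb _ _ _ _ _ fun γ => ?_
  rw [papp_actMap_comp, papp_comp, papp_comp, papp_comp, sF.isPointwiseStrength,
    sG.isPointwiseStrength, Category.assoc, τ.naturality, τ.naturality_assoc]

end Strength

namespace IsPointwiseStrength

variable {F : C ⥤ D} {str : ∀ (Γ : V) (X : C), b.act Γ (F.obj X) ⟶ F.obj (a.act Γ X)}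

lemma natural_fst (hb : b.WellPointed) (H : IsPointwiseStrength F str) {Γ Δ : V} (u : Γ ⟶ Δ)
    (X : C) : b.actHom u (F.obj X) ≫ str Δ X = str Γ X ≫ F.map (a.actHom u X) := by
  refine hb _ _ _ _ _ fun γ => ?_
  rw [papp_actHom_comp, papp_comp, H, H, ← F.map_comp]
  simp [papp]

lemma natural_snd (hb : b.WellPointed) (H : IsPointwiseStrength F str) (Γ : V) {X Y : C}
    (f : X ⟶ Y) : b.actMap Γ (F.map f) ≫ str Γ Y = str Γ X ≫ F.map (a.actMap Γ f) := by
  refine hb _ _ _ _ _ fun γ => ?_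
  have hf := a.papp_actMap_comp f (𝟙 _) γ
  rw [Category.comp_id] at hf
  rw [papp_actMap_comp, papp_comp, H, H, ← F.map_comp, ← F.map_comp, ← hf]
  simp [papp]

lemma str_unit (H : IsPointwiseStrength F str) (X : C) :
    str (𝟙_ V) X ≫ F.map (a.lam X).hom = (b.lam (F.obj X)).hom := by
  have h := H (𝟙_ V) X (𝟙 _)
  rw [papp_id_point, papp_id_point, Category.comp_id, Iso.inv_comp_eq] at h
  rw [h, Category.assoc, ← F.map_comp, Iso.inv_hom_id, F.map_id, Category.comp_id]

lemma str_assoc (hb : b.WellPointed) (H : IsPointwiseStrength F str) (Γ' Γ : V) (X : C) :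
    (b.assoc Γ' Γ (F.obj X)).hom ≫ b.actMap Γ' (str Γ X) ≫ str Γ' (a.act Γ X)
      = str (Γ' ⊗ Γ) X ≫ F.map (a.assoc Γ' Γ X).hom := by
  rw [← Iso.eq_inv_comp]
  refine hb _ _ _ _ _ fun γ' => ?_
  calc b.papp (b.actMap Γ' (str Γ X) ≫ str Γ' (a.act Γ X)) γ'
      = str Γ X ≫ F.map ((a.lam (a.act Γ X)).inv ≫ a.actHom γ' (a.act Γ X)) := by
        rw [papp_actMap_comp, H]
        simp [papp]
    _ = str Γ X ≫ F.map (a.actHom ((λ_ Γ).inv ≫ γ' ▷ Γ) X ≫ (a.assoc Γ' Γ X).hom) := by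
        rw [lam_inv_comp_actHom]
    _ = b.actHom ((λ_ Γ).inv ≫ γ' ▷ Γ) (F.obj X) ≫ str (Γ' ⊗ Γ) X
          ≫ F.map (a.assoc Γ' Γ X).hom := by
        rw [F.map_comp, reassoc_of% (H.natural_fst hb _ X)]
    _ = b.papp ((b.assoc Γ' Γ (F.obj X)).inv ≫ str (Γ' ⊗ Γ) X
          ≫ F.map (a.assoc Γ' Γ X).hom) γ' := by
        rw [papp, ← Category.assoc (b.lam _).inv, lam_inv_comp_actHom]
        simp

end IsPointwiseStrength

def Strength.ofPointwise (hb : b.WellPointed) {F : C ⥤ D}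
    (str : ∀ (Γ : V) (X : C), b.act Γ (F.obj X) ⟶ F.obj (a.act Γ X))
    (H : IsPointwiseStrength F str) : Strength a b F where
  str := str
  natural_fst := H.natural_fst hb
  natural_snd := H.natural_snd hb
  str_unit := H.str_unit
  str_assoc := H.str_assoc hb

end

/-- if the action of `V` on `D` is well-pointed then a functor
`F : C ⥤ D` admits a strength iff there is a family
`str_{Γ,X} : Γ ▷ FX ⟶ F(Γ ▷ X)` with `str_{Γ,X}⁻(γ) = F((𝟙_{Γ▷X})⁻(γ))` for all
points `γ`; strengths are unique (and any strength satisfies the above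
pointwise condition); moreover every natural transformation between strong
functors `C ⥤ D` is strong. -/
theorem statement6 {V : Type u₁} [Category.{v₁} V] [MonoidalCategory V]
    {C : Type u₂} [Category.{v₂} C] {D : Type u₃} [Category.{v₃} D]
    (a : LeftAction V C) (b : LeftAction V D) (hb : b.WellPointed) :
    (∀ F : C ⥤ D,
      Nonempty (Strength a b F) ↔
        ∃ str : ∀ (Γ : V) (X : C), b.act Γ (F.obj X) ⟶ F.obj (a.act Γ X),
          ∀ (Γ : V) (X : C) (γ : 𝟙_ V ⟶ Γ),
            b.papp (str Γ X) γ = F.map (a.papp (𝟙 (a.act Γ X)) γ)) ∧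
    (∀ (F : C ⥤ D) (s : Strength a b F) (Γ : V) (X : C) (γ : 𝟙_ V ⟶ Γ),
      b.papp (s.str Γ X) γ = F.map (a.papp (𝟙 (a.act Γ X)) γ)) ∧
    (∀ (F : C ⥤ D) (s t : Strength a b F), s = t) ∧
    (∀ (F G : C ⥤ D) (sF : Strength a b F) (sG : Strength a b G) (τ : F ⟶ G),
      IsStrongNatTrans sF sG τ) :=
  ⟨fun _ => ⟨fun ⟨s⟩ => ⟨s.str, s.isPointwiseStrength⟩,
      fun ⟨str, H⟩ => ⟨Strength.ofPointwise hb str H⟩⟩,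
    fun _ s => s.isPointwiseStrength,
    fun _ => Strength.ext_of_wellPointed hb,
    fun _ _ => Strength.isStrongNatTrans_of_wellPointed hb⟩
end

section
/- In the Cartesian monoidal category of pointed sets acting on itself, the assignment Φ_Γ ζ (γ, x) = ζ(⋆)(x), for ζ : Set⋆(1, Γ) → Set⋆(X, Y), is a weak functional completeness structure, and it is the unique weak functional completeness structure for this action, even though the action is not well-pointed (every object has exactly one point). -/
open CategoryTheory MonoidalCategory

universe v₁ v₂ v₃ u₁ u₂ u₃

/-- The action of a monoidal category of itself, by the tensor. -/
def selfAction (V : Type u₁) [Category.{v₁} V] [MonoidalCategory V] :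
    LeftAction V V where
  F := curriedTensor V
  lam X := λ_ X
  lam_natural f := by simp
  assoc Γ' Γ X := α_ Γ' Γ X
  assoc_natural u v f := by
    simp [MonoidalCategory.tensorHom_def]
  triangle Γ X := by
    simp
  unit_assoc Γ X := by
    simp
  pentagon Γ₁ Γ₂ Γ₃ X := by
    simp [MonoidalCategory.pentagon]
/-- A weak functional completeness structure for an action of `V` on `D`:
an assignment of a morphism `Φ_Γ ζ : Γ ▷ X ⟶ Y` with `(Φ_Γ ζ)⁻ = ζ` to each
function `ζ : V(I,Γ) → D(X,Y)`, natural in `Γ`, `X`, `Y` and compatible with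
the tensor of `V`. -/
structure WFCStructure {V : Type u₁} [Category.{v₁} V] [MonoidalCategory V]
    {D : Type u₃} [Category.{v₃} D] (b : LeftAction V D) where
  Phi : ∀ (Γ : V) (X Y : D), ((𝟙_ V ⟶ Γ) → (X ⟶ Y)) → (b.act Γ X ⟶ Y)
  papp_Phi : ∀ (Γ : V) (X Y : D) (ζ : (𝟙_ V ⟶ Γ) → (X ⟶ Y)) (γ : 𝟙_ V ⟶ Γ),
    b.papp (Phi Γ X Y ζ) γ = ζ γ
  natural_ctx : ∀ {Γ Δ : V} (u : Γ ⟶ Δ) (X Y : D)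
      (ζ : (𝟙_ V ⟶ Δ) → (X ⟶ Y)),
    b.actHom u X ≫ Phi Δ X Y ζ = Phi Γ X Y (fun γ => ζ (γ ≫ u))
  natural_dom : ∀ (Γ : V) {X' X Y : D} (h : X' ⟶ X)
      (ζ : (𝟙_ V ⟶ Γ) → (X ⟶ Y)),
    b.actMap Γ h ≫ Phi Γ X Y ζ = Phi Γ X' Y (fun γ => h ≫ ζ γ)
  natural_cod : ∀ (Γ : V) {X Y Y' : D} (k : Y ⟶ Y')
      (ζ : (𝟙_ V ⟶ Γ) → (X ⟶ Y)),
    Phi Γ X Y ζ ≫ k = Phi Γ X Y' (fun γ => ζ γ ≫ k)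
  tensor : ∀ (Γ' Γ : V) (X Y : D) (ζ : (𝟙_ V ⟶ Γ' ⊗ Γ) → (X ⟶ Y)),
    Phi (Γ' ⊗ Γ) X Y ζ
      = (b.assoc Γ' Γ X).hom ≫
          Phi Γ' (b.act Γ X) Y (fun γ' =>
            Phi Γ X Y (fun γ => ζ ((ρ_ (𝟙_ V)).inv ≫ (γ' ⊗ₘ γ))))
open Limits in
/-- The Cartesian monoidal structure on the category of pointed sets. -/
noncomputable instance : CartesianMonoidalCategory Pointed.{u₂} :=
  CartesianMonoidalCategory.ofChosenFiniteProducts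
    { cone := asEmptyCone (Pointed.of PUnit.unit)
      isLimit := IsTerminal.ofUniqueHom (fun X => ⟨fun _ => PUnit.unit, rfl⟩)
        (fun X m => by apply Pointed.Hom.ext; funext t; rfl) }
  (fun X Y =>
    { cone := BinaryFan.mk (P := Pointed.of (X.point, Y.point))
        ⟨Prod.fst, rfl⟩ ⟨Prod.snd, rfl⟩
      isLimit := BinaryFan.IsLimit.mk _
        (fun f g => ⟨fun t => (f.toFun t, g.toFun t), by
          simp only [f.map_point, g.map_point]; rfl⟩)
        (fun f g => rfl) (fun f g => rfl)
        (fun f g m h₁ h₂ => by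
          apply Pointed.Hom.ext
          funext t
          exact Prod.ext (congrFun (congrArg Pointed.Hom.toFun h₁) t)
            (congrFun (congrArg Pointed.Hom.toFun h₂) t)) })

/-- The unique point of a pointed set `Γ`, as a morphism `𝟙_ Set⋆ ⟶ Γ`. -/
def thePoint (Γ : Pointed.{u₂}) : 𝟙_ Pointed.{u₂} ⟶ Γ :=
  ⟨fun _ => Γ.point, rfl⟩

/-!
Every pointed set has exactly one global point, so a family `ζ` indexed by the points of `Γ`
is constant. For constant families, `(Φ ζ)⁻ = ζ` at the unit fixes `Φ_I`, and naturality in the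
context along `Γ ⟶ I` transports this to every `Γ`; for the self-action of a cartesian category
the result is `ζ(⋆) ∘ snd`. Points cannot separate maps `Γ ⊗ I ⟶ Y ≅ Γ ⟶ Y`, which is why the
action is not well-pointed.
-/

namespace WFCStructure

variable {V : Type u₁} [Category.{v₁} V] [MonoidalCategory V]
  {D : Type u₃} [Category.{v₃} D] {b : LeftAction V D}

theorem ext_of_Phi_eq {Φ Ψ : WFCStructure b} (h : Φ.Phi = Ψ.Phi) : Φ = Ψ := by
  cases Φ
  cases Ψ
  cases h
  rfl

theorem Phi_unit_const_id (Φ : WFCStructure b) (X : D) :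
    Φ.Phi (𝟙_ V) X X (fun _ => 𝟙 X) = (b.lam X).hom := by
  have h := Φ.papp_Phi (𝟙_ V) X X (fun _ => 𝟙 X) (𝟙 _)
  simp only [LeftAction.papp, LeftAction.actHom, CategoryTheory.Functor.map_id,
    NatTrans.id_app, Category.id_comp] at h
  rw [Iso.inv_comp_eq, Category.comp_id] at h
  exact h

theorem Phi_const (Φ : WFCStructure b) {Γ : V} (t : Γ ⟶ 𝟙_ V) (X Y : D) (f : X ⟶ Y) :
    Φ.Phi Γ X Y (fun _ => f) = b.actHom t X ≫ (b.lam X).hom ≫ f := by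
  calc Φ.Phi Γ X Y (fun _ => f) = Φ.Phi Γ X X (fun _ => 𝟙 X) ≫ f := by
        rw [Φ.natural_cod]
        simp only [Category.id_comp]
    _ = _ := by
        rw [← Φ.natural_ctx t X X (fun _ => 𝟙 X), Phi_unit_const_id, Category.assoc]

end WFCStructure

section UniquePoints

open CartesianMonoidalCategory

variable {V : Type u₁} [Category.{v₁} V] [CartesianMonoidalCategory V]

theorem not_wellPointed_selfAction {Γ Y : V} [∀ Z : V, Subsingleton (𝟙_ V ⟶ Z)]
    {f g : Γ ⟶ Y} (hfg : f ≠ g) : ¬ (selfAction V).WellPointed := by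
  intro hwp
  apply hfg
  have h := hwp Γ (𝟙_ V) Y ((ρ_ Γ).hom ≫ f) ((ρ_ Γ).hom ≫ g)
    (fun _ => Subsingleton.elim _ _)
  exact (Iso.cancel_iso_hom_left _ _ _).mp h

variable [∀ Γ : V, Unique (𝟙_ V ⟶ Γ)]

noncomputable def selfActionWFC : WFCStructure (selfAction V) where
  Phi Γ X _ ζ := snd Γ X ≫ ζ default
  papp_Phi Γ X Y ζ γ := by
    show (λ_ X).inv ≫ γ ▷ X ≫ snd Γ X ≫ ζ default = ζ γ
    rw [whiskerRight_snd_assoc, leftUnitor_inv_snd_assoc, Subsingleton.elim γ default]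
  natural_ctx u X Y ζ := by
    simp only [Subsingleton.elim (default ≫ u) default]
    exact whiskerRight_snd_assoc u X _
  natural_dom Γ _ _ _ h _ := whiskerLeft_snd_assoc Γ h _
  natural_cod _ _ _ _ _ _ := Category.assoc _ _ _
  tensor Γ' Γ X Y ζ := by
    simp only [Subsingleton.elim ((ρ_ (𝟙_ V)).inv ≫ (default ⊗ₘ default)) default]
    exact (associator_hom_snd_snd_assoc Γ' Γ X _).symm

theorem WFCStructure.eq_selfActionWFC (Φ : WFCStructure (selfAction V)) :
    Φ = selfActionWFC := by
  refine WFCStructure.ext_of_Phi_eq ?_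
  funext Γ X Y ζ
  have hζ : ζ = fun _ => ζ default := funext fun γ => congrArg ζ (Subsingleton.elim γ default)
  rw [hζ, Φ.Phi_const (toUnit Γ)]
  exact whiskerRight_toUnit_comp_leftUnitor_hom_assoc Γ X _

end UniquePoints

instance (Γ : Pointed.{u₂}) : Unique (𝟙_ Pointed.{u₂} ⟶ Γ) where
  default := thePoint Γ
  uniq γ := Pointed.Hom.ext (funext fun _ => γ.map_point)

theorem Pointed.id_ne_const :
    𝟙 (Pointed.of (ULift.up.{u₂} false)) ≠ ⟨fun _ => ULift.up false, rfl⟩ := by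
  intro h
  have := congrArg ULift.down (congrFun (congrArg Pointed.Hom.toFun h) (ULift.up true))
  exact Bool.noConfusion this

/-- for the Cartesian monoidal category of pointed sets acting on
itself, the assignment `Φ_Γ ζ = ζ(⋆) ∘ snd` (i.e. `Φ_Γ ζ (γ, x) = ζ(⋆)(x)`)
is a weak functional completeness structure; it is the unique one; the action
is not well-pointed; and every object has exactly one point. -/
theorem statement8 :
    (∃ Φ : WFCStructure (selfAction Pointed.{u₂}),
      ∀ (Γ X Y : Pointed.{u₂}) (ζ : (𝟙_ Pointed.{u₂} ⟶ Γ) → (X ⟶ Y)),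
        Φ.Phi Γ X Y ζ = CartesianMonoidalCategory.snd Γ X ≫ ζ (thePoint Γ)) ∧
    (∀ Φ Ψ : WFCStructure (selfAction Pointed.{u₂}), Φ = Ψ) ∧
    ¬ (selfAction Pointed.{u₂}).WellPointed ∧
    (∀ Γ : Pointed.{u₂}, ∃! _γ : 𝟙_ Pointed.{u₂} ⟶ Γ, True) :=
  ⟨⟨selfActionWFC, fun _ _ _ _ => rfl⟩,
    fun Φ Ψ => Φ.eq_selfActionWFC.trans Ψ.eq_selfActionWFC.symm,
    not_wellPointed_selfAction Pointed.id_ne_const,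
    fun _ => ⟨default, trivial, fun γ _ => Subsingleton.elim γ default⟩⟩
end

section
/- Under the correspondence between actions and enrichments (assuming, for each X, an adjunction − ▷ X ⊣ X ⊸ − and a right closed structure on V), strong monads on C are in bijection with V-enriched monads on C, i.e. with data (TX, η_X : X → TX, bind_{X,Y} : (X ⊸ TY) → (TX ⊸ TY)) satisfying the three enriched monad equations; this bijection preserves the underlying ordinary monads, and a monad morphism between such monads is strong if and only if it is enriched. -/
/-!
Through the adjunctions `− ▷ X ⊣ X ⊸ −` a morphism `Γ ▷ X ⟶ Y` is the same as a morphism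
`Γ ⟶ (X ⊸ Y)`. A Kleisli extension is natural in `Γ`, so it is determined by its value on the
counit `ε : (X ⊸ TY) ▷ X ⟶ TY`; this forces `bind` to be the transpose of `ε♯`, and conversely
`f♯` is the transpose of `bind ∘ f̂`. Since `j` and `M` are the transposes of the unitor and of the
associator followed by two counits, transposition turns each enriched monad law into the
corresponding strong monad law. The same argument reduces the strength of a monad morphism `τ`
to its instance at the counit, whose transpose is exactly enrichedness of `τ`.
-/

open CategoryTheory MonoidalCategory

universe v₁ v₂ v₃ u₁ u₂ u₃

open Opposite

/-- The data making a fixed bifunctor `act : V ⥤ C ⥤ C` into a left action of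
`V` on `C` (unitor, associator, and their coherence laws). -/
structure ActionStr {V : Type u₁} [Category.{v₁} V] [MonoidalCategory V]
    {C : Type u₂} [Category.{v₂} C] (act : V ⥤ C ⥤ C) where
  lam : ∀ X : C, (act.obj (𝟙_ V)).obj X ≅ X
  lam_natural : ∀ {X Y : C} (f : X ⟶ Y),
    (act.obj (𝟙_ V)).map f ≫ (lam Y).hom = (lam X).hom ≫ f
  assoc : ∀ (Γ' Γ : V) (X : C),
    (act.obj (Γ' ⊗ Γ)).obj X ≅ (act.obj Γ').obj ((act.obj Γ).obj X)
  assoc_natural : ∀ {Γ' Δ' Γ Δ : V} (u : Γ' ⟶ Δ') (v : Γ ⟶ Δ) {X Y : C} (f : X ⟶ Y),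
    (act.map (u ⊗ₘ v)).app X ≫ (act.obj (Δ' ⊗ Δ)).map f ≫ (assoc Δ' Δ Y).hom
      = (assoc Γ' Γ X).hom ≫ (act.map u).app ((act.obj Γ).obj X)
          ≫ (act.obj Δ').map ((act.map v).app X ≫ (act.obj Δ).map f)
  triangle : ∀ (Γ : V) (X : C),
    (act.map (ρ_ Γ).inv).app X ≫ (assoc Γ (𝟙_ V) X).hom
      ≫ (act.obj Γ).map (lam X).hom = 𝟙 _
  unit_assoc : ∀ (Γ : V) (X : C),
    (assoc (𝟙_ V) Γ X).hom ≫ (lam ((act.obj Γ).obj X)).hom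
      = (act.map (λ_ Γ).hom).app X
  pentagon : ∀ (Γ₁ Γ₂ Γ₃ : V) (X : C),
    (act.map (α_ Γ₁ Γ₂ Γ₃).hom).app X ≫ (assoc Γ₁ (Γ₂ ⊗ Γ₃) X).hom
        ≫ (act.obj Γ₁).map (assoc Γ₂ Γ₃ X).hom
      = (assoc (Γ₁ ⊗ Γ₂) Γ₃ X).hom ≫ (assoc Γ₁ Γ₂ ((act.obj Γ₃).obj X)).hom

/-- Repackage an `ActionStr` as a `LeftAction`. -/
def ActionStr.toLeftAction {V : Type u₁} [Category.{v₁} V] [MonoidalCategory V]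
    {C : Type u₂} [Category.{v₂} C] {act : V ⥤ C ⥤ C} (A : ActionStr act) :
    LeftAction V C where
  F := act
  lam := A.lam
  lam_natural := A.lam_natural
  assoc := A.assoc
  assoc_natural := A.assoc_natural
  triangle := A.triangle
  unit_assoc := A.unit_assoc
  pentagon := A.pentagon

/-- An enrichment of `C` over `V` on a fixed hom-bifunctor
`hom : Cᵒᵖ ⥤ C ⥤ V`: identities `j`, composition `M`, the unit and
associativity laws, and the requirement that the underlying ordinary category
is `C` itself (the maps `f ↦ ĵ f` are bijections). -/
structure EnrichmentStr {V : Type u₁} [Category.{v₁} V] [MonoidalCategory V]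
    {C : Type u₂} [Category.{v₂} C] (hom : Cᵒᵖ ⥤ C ⥤ V) where
  j : ∀ X : C, 𝟙_ V ⟶ (hom.obj (op X)).obj X
  M : ∀ X Y Z : C,
    (hom.obj (op Y)).obj Z ⊗ (hom.obj (op X)).obj Y ⟶ (hom.obj (op X)).obj Z
  j_extranatural : ∀ {X Y : C} (f : X ⟶ Y),
    j X ≫ (hom.obj (op X)).map f = j Y ≫ (hom.map f.op).app Y
  M_natural_left : ∀ {X X' : C} (f : X' ⟶ X) (Y Z : C),
    M X Y Z ≫ (hom.map f.op).app Z
      = ((hom.obj (op Y)).obj Z ◁ (hom.map f.op).app Y) ≫ M X' Y Z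
  M_extranatural_mid : ∀ (X : C) {Y Y' : C} (g : Y ⟶ Y') (Z : C),
    ((hom.map g.op).app Z ▷ (hom.obj (op X)).obj Y) ≫ M X Y Z
      = ((hom.obj (op Y')).obj Z ◁ (hom.obj (op X)).map g) ≫ M X Y' Z
  M_natural_right : ∀ (X Y : C) {Z Z' : C} (h : Z ⟶ Z'),
    M X Y Z ≫ (hom.obj (op X)).map h
      = ((hom.obj (op Y)).map h ▷ (hom.obj (op X)).obj Y) ≫ M X Y Z'
  unit_left : ∀ X Y : C,
    (j Y ▷ (hom.obj (op X)).obj Y) ≫ M X Y Y = (λ_ ((hom.obj (op X)).obj Y)).hom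
  unit_right : ∀ X Y : C,
    ((hom.obj (op X)).obj Y ◁ j X) ≫ M X X Y = (ρ_ ((hom.obj (op X)).obj Y)).hom
  assoc : ∀ W X Y Z : C,
    (M X Y Z ▷ (hom.obj (op W)).obj X) ≫ M W X Z
      = (α_ _ _ _).hom ≫ ((hom.obj (op Y)).obj Z ◁ M W X Y) ≫ M W Y Z
  underlying_bijective : ∀ X Y : C,
    Function.Bijective (fun f : X ⟶ Y => j X ≫ (hom.obj (op X)).map f)
variable {V : Type u₁} [Category.{v₁} V] [MonoidalCategory V]
variable {C : Type u₂} [Category.{v₂} C]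

/-- The action structure `A` and the enrichment structure `E` are related via
the adjunctions `− ▷ X ⊣ X ⊸ −`. -/
def EnrRelated (act : V ⥤ C ⥤ C) (hom : Cᵒᵖ ⥤ C ⥤ V)
    (adj : ∀ X : C, act.flip.obj X ⊣ hom.obj (op X))
    (A : ActionStr act) (E : EnrichmentStr hom) : Prop :=
  (∀ X : C, E.j X = (adj X).homEquiv (𝟙_ V) X (A.lam X).hom) ∧
  (∀ X Y Z : C,
    E.M X Y Z = (adj X).homEquiv _ Z
      ((A.assoc ((hom.obj (op Y)).obj Z) ((hom.obj (op X)).obj Y) X).hom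
        ≫ (act.obj ((hom.obj (op Y)).obj Z)).map ((adj X).counit.app Y)
        ≫ (adj Y).counit.app Z))

/-- A strong monad (Kleisli-extension presentation) on given object and unit
data `(T₀, η₀)`, with respect to a left action `a` of `V` on `C`. -/
structure KleisliExt (a : LeftAction V C) (T₀ : C → C)
    (η₀ : ∀ X : C, X ⟶ T₀ X) where
  ext : ∀ {Γ : V} {X Y : C}, (a.act Γ X ⟶ T₀ Y) → (a.act Γ (T₀ X) ⟶ T₀ Y)
  natural : ∀ {Γ Δ : V} (u : Γ ⟶ Δ) {X Y : C} (f : a.act Δ X ⟶ T₀ Y),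
    ext (a.actHom u X ≫ f) = a.actHom u (T₀ X) ≫ ext f
  law_unit : ∀ X : C, ext ((a.lam X).hom ≫ η₀ X) = (a.lam (T₀ X)).hom
  law_ext_unit : ∀ {Γ : V} {X Y : C} (f : a.act Γ X ⟶ T₀ Y),
    a.actMap Γ (η₀ X) ≫ ext f = f
  law_assoc : ∀ {Γ' Γ : V} {X Y Z : C}
      (f : a.act Γ X ⟶ T₀ Y) (g : a.act Γ' Y ⟶ T₀ Z),
    (a.assoc Γ' Γ (T₀ X)).hom ≫ a.actMap Γ' (ext f) ≫ ext g
      = ext ((a.assoc Γ' Γ X).hom ≫ a.actMap Γ' f ≫ ext g)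

/-- An enriched monad (`bind` presentation) on given object and unit data
`(T₀, η₀)`, with respect to an enrichment of `C` over `V`. -/
structure EnrichedBind {hom : Cᵒᵖ ⥤ C ⥤ V} (E : EnrichmentStr hom)
    (T₀ : C → C) (η₀ : ∀ X : C, X ⟶ T₀ X) where
  bind : ∀ X Y : C,
    (hom.obj (op X)).obj (T₀ Y) ⟶ (hom.obj (op (T₀ X))).obj (T₀ Y)
  law_unit_right : ∀ X Y : C,
    bind X Y ≫ (hom.map (η₀ X).op).app (T₀ Y) = 𝟙 _
  law_unit_left : ∀ X : C,
    E.j X ≫ (hom.obj (op X)).map (η₀ X) ≫ bind X X = E.j (T₀ X)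
  law_M : ∀ X Y Z : C,
    (bind Y Z ▷ (hom.obj (op X)).obj (T₀ Y)) ≫ E.M X (T₀ Y) (T₀ Z) ≫ bind X Z
      = (bind Y Z ⊗ₘ bind X Y) ≫ E.M (T₀ X) (T₀ Y) (T₀ Z)

-- Lets the laws of a `KleisliExt` over `AC.toLeftAction` apply to morphisms typed through `act`.
attribute [reducible] ActionStr.toLeftAction

@[ext]
lemma KleisliExt.ext' {a : LeftAction V C} {T₀ : C → C} {η₀ : ∀ X : C, X ⟶ T₀ X}
    {S T : KleisliExt a T₀ η₀}
    (h : ∀ (Γ : V) (X Y : C) (f : a.act Γ X ⟶ T₀ Y), S.ext f = T.ext f) : S = T := by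
  cases S; cases T; congr; funext Γ X Y f; exact h Γ X Y f

attribute [ext] EnrichedBind

namespace ActionEnrichment

lemma comp_hom_map_op_eq_M {hom : Cᵒᵖ ⥤ C ⥤ V} (E : EnrichmentStr hom) {A : V} {X X' B : C}
    (f : X ⟶ X') (k : A ⟶ (hom.obj (op X')).obj B) :
    k ≫ (hom.map f.op).app B
      = (ρ_ A).inv ≫ (k ⊗ₘ (E.j X ≫ (hom.obj (op X)).map f)) ≫ E.M X X' B := by
  rw [E.j_extranatural f, MonoidalCategory.tensorHom_def, MonoidalCategory.whiskerLeft_comp,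
    Category.assoc, Category.assoc, ← E.M_natural_left, reassoc_of% E.unit_right]
  simp

variable {act : V ⥤ C ⥤ C} {hom : Cᵒᵖ ⥤ C ⥤ V}

section Transpose

omit [MonoidalCategory V]

variable (adj : ∀ X : C, act.flip.obj X ⊣ hom.obj (op X))

def curry (X : C) {A : V} {B : C} (f : (act.obj A).obj X ⟶ B) :
    A ⟶ (hom.obj (op X)).obj B :=
  (adj X).homEquiv A B f

def uncurry (X : C) {A : V} {B : C} (k : A ⟶ (hom.obj (op X)).obj B) :
    (act.obj A).obj X ⟶ B :=
  ((adj X).homEquiv A B).symm k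

variable (X : C) {A A' : V} {B B' : C}

@[simp]
lemma uncurry_curry (f : (act.obj A).obj X ⟶ B) : uncurry adj X (curry adj X f) = f :=
  ((adj X).homEquiv A B).symm_apply_apply f

@[simp]
lemma curry_uncurry (k : A ⟶ (hom.obj (op X)).obj B) : curry adj X (uncurry adj X k) = k :=
  ((adj X).homEquiv A B).apply_symm_apply k

lemma curry_injective : Function.Injective (curry adj X (A := A) (B := B)) :=
  ((adj X).homEquiv A B).injective

lemma uncurry_injective : Function.Injective (uncurry adj X (A := A) (B := B)) :=
  ((adj X).homEquiv A B).symm.injective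

lemma curry_comp_left (u : A' ⟶ A) (f : (act.obj A).obj X ⟶ B) :
    curry adj X ((act.map u).app X ≫ f) = u ≫ curry adj X f :=
  (adj X).homEquiv_naturality_left u f

lemma curry_comp_right (f : (act.obj A).obj X ⟶ B) (g : B ⟶ B') :
    curry adj X (f ≫ g) = curry adj X f ≫ (hom.obj (op X)).map g :=
  (adj X).homEquiv_naturality_right f g

lemma uncurry_comp_left (u : A' ⟶ A) (k : A ⟶ (hom.obj (op X)).obj B) :
    uncurry adj X (u ≫ k) = (act.map u).app X ≫ uncurry adj X k :=
  (adj X).homEquiv_naturality_left_symm u k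

lemma uncurry_comp_right (k : A ⟶ (hom.obj (op X)).obj B) (g : B ⟶ B') :
    uncurry adj X (k ≫ (hom.obj (op X)).map g) = uncurry adj X k ≫ g :=
  (adj X).homEquiv_naturality_right_symm k g

lemma uncurry_eq (k : A ⟶ (hom.obj (op X)).obj B) :
    uncurry adj X k = (act.map k).app X ≫ (adj X).counit.app B :=
  (adj X).homEquiv_counit A B k

lemma uncurry_id : uncurry adj X (𝟙 ((hom.obj (op X)).obj B)) = (adj X).counit.app B := by
  simp [uncurry_eq]

lemma curry_counit : curry adj X ((adj X).counit.app B) = 𝟙 ((hom.obj (op X)).obj B) := by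
  rw [← uncurry_id, curry_uncurry]

lemma act_map_hom_map_comp_counit (g : B ⟶ B') :
    (act.map ((hom.obj (op X)).map g)).app X ≫ (adj X).counit.app B'
      = (adj X).counit.app B ≫ g :=
  (adj X).counit.naturality g

end Transpose

section Related

variable {adj : ∀ X : C, act.flip.obj X ⊣ hom.obj (op X)} {AC : ActionStr act}
  {EC : EnrichmentStr hom}

lemma j_eq_curry (hrel : EnrRelated act hom adj AC EC) (X : C) :
    EC.j X = curry adj X (AC.lam X).hom :=
  hrel.1 X

lemma uncurry_j (hrel : EnrRelated act hom adj AC EC) (X : C) :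
    uncurry adj X (EC.j X) = (AC.lam X).hom := by
  rw [j_eq_curry hrel, uncurry_curry]

lemma uncurry_M (hrel : EnrRelated act hom adj AC EC) (X Y Z : C) :
    uncurry adj X (EC.M X Y Z)
      = (AC.assoc ((hom.obj (op Y)).obj Z) ((hom.obj (op X)).obj Y) X).hom
        ≫ (act.obj ((hom.obj (op Y)).obj Z)).map ((adj X).counit.app Y)
        ≫ (adj Y).counit.app Z := by
  rw [hrel.2 X Y Z]
  exact uncurry_curry adj X _

lemma tensorHom_comp_M (hrel : EnrRelated act hom adj AC EC) {A B : V} {X Y Z : C}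
    (g : A ⟶ (hom.obj (op Y)).obj Z) (h : B ⟶ (hom.obj (op X)).obj Y) :
    (g ⊗ₘ h) ≫ EC.M X Y Z
      = curry adj X ((AC.assoc A B X).hom ≫ (act.obj A).map (uncurry adj X h)
          ≫ uncurry adj Y g) := by
  apply uncurry_injective adj X
  have hassoc := AC.assoc_natural g h (𝟙 X)
  simp only [CategoryTheory.Functor.map_id, Category.id_comp, Category.comp_id] at hassoc
  rw [uncurry_curry, uncurry_comp_left, uncurry_M hrel, reassoc_of% hassoc,
    uncurry_eq adj X h, uncurry_eq adj Y g, (act.map g).naturality_assoc, Functor.map_comp_assoc]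

lemma uncurry_comp_hom_map_op (hrel : EnrRelated act hom adj AC EC) {X X' B : C}
    (f : X ⟶ X') {A : V} (k : A ⟶ (hom.obj (op X')).obj B) :
    uncurry adj X (k ≫ (hom.map f.op).app B) = (act.obj A).map f ≫ uncurry adj X' k := by
  rw [comp_hom_map_op_eq_M EC f, tensorHom_comp_M hrel, uncurry_comp_left, uncurry_curry,
    uncurry_comp_right, uncurry_j hrel, Functor.map_comp, Category.assoc,
    reassoc_of% AC.triangle A X]

end Related

section Monad

variable {adj : ∀ X : C, act.flip.obj X ⊣ hom.obj (op X)} {AC : ActionStr act}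
  {EC : EnrichmentStr hom} {T₀ : C → C} {η₀ : ∀ X : C, X ⟶ T₀ X}

variable (adj) in
def kleisliBind (S : KleisliExt AC.toLeftAction T₀ η₀) (X Y : C) :
    (hom.obj (op X)).obj (T₀ Y) ⟶ (hom.obj (op (T₀ X))).obj (T₀ Y) :=
  curry adj (T₀ X) (S.ext ((adj X).counit.app (T₀ Y)))

lemma uncurry_kleisliBind (S : KleisliExt AC.toLeftAction T₀ η₀) (X Y : C) :
    uncurry adj (T₀ X) (kleisliBind adj S X Y) = S.ext ((adj X).counit.app (T₀ Y)) :=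
  uncurry_curry adj _ _

lemma uncurry_curry_comp_kleisliBind (S : KleisliExt AC.toLeftAction T₀ η₀) {Γ : V} {X Y : C}
    (f : (act.obj Γ).obj X ⟶ T₀ Y) :
    uncurry adj (T₀ X) (curry adj X f ≫ kleisliBind adj S X Y) = S.ext f := by
  rw [uncurry_comp_left, uncurry_kleisliBind, ← S.natural, ← uncurry_eq, uncurry_curry]

def enrichedBindOfKleisliExt (hrel : EnrRelated act hom adj AC EC)
    (S : KleisliExt AC.toLeftAction T₀ η₀) : EnrichedBind EC T₀ η₀ where
  bind := kleisliBind adj S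
  law_unit_right X Y := by
    apply uncurry_injective adj X
    rw [uncurry_comp_hom_map_op hrel, uncurry_kleisliBind, S.law_ext_unit, uncurry_id]
  law_unit_left X := by
    apply uncurry_injective adj (T₀ X)
    rw [← Category.assoc, j_eq_curry hrel, ← curry_comp_right, uncurry_curry_comp_kleisliBind,
      S.law_unit, uncurry_j hrel]
  law_M X Y Z := by
    apply uncurry_injective adj (T₀ X)
    rw [← tensorHom_id, reassoc_of% tensorHom_comp_M hrel, uncurry_curry_comp_kleisliBind,
      tensorHom_comp_M hrel, uncurry_curry, uncurry_id, uncurry_kleisliBind, uncurry_kleisliBind,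
      S.law_assoc]

def kleisliExtOfEnrichedBind (hrel : EnrRelated act hom adj AC EC) (B : EnrichedBind EC T₀ η₀) :
    KleisliExt AC.toLeftAction T₀ η₀ where
  ext {_ X Y} f := uncurry adj (T₀ X) (curry adj X f ≫ B.bind X Y)
  natural u X Y f := by
    rw [curry_comp_left, Category.assoc, uncurry_comp_left]
  law_unit X := by
    rw [curry_comp_right, ← j_eq_curry hrel, Category.assoc, B.law_unit_left, uncurry_j hrel]
  law_ext_unit f := by
    rw [← uncurry_comp_hom_map_op hrel, Category.assoc, B.law_unit_right, Category.comp_id,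
      uncurry_curry]
  law_assoc {Γ' Γ X Y Z} f g := by
    apply curry_injective adj (T₀ X)
    calc _ = ((curry adj Y g ≫ B.bind Y Z) ⊗ₘ (curry adj X f ≫ B.bind X Y))
            ≫ EC.M (T₀ X) (T₀ Y) (T₀ Z) := by
          rw [tensorHom_comp_M hrel]
      _ = ((curry adj Y g ≫ B.bind Y Z) ⊗ₘ curry adj X f) ≫ EC.M X (T₀ Y) (T₀ Z)
            ≫ B.bind X Z := by
          rw [← tensorHom_comp_tensorHom, Category.assoc, ← B.law_M, ← tensorHom_id,
            tensorHom_comp_tensorHom_assoc, Category.comp_id]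
      _ = _ := by
          rw [reassoc_of% tensorHom_comp_M hrel, uncurry_curry, curry_uncurry]

def kleisliExtEquivEnrichedBind (hrel : EnrRelated act hom adj AC EC) :
    KleisliExt AC.toLeftAction T₀ η₀ ≃ EnrichedBind EC T₀ η₀ where
  toFun := enrichedBindOfKleisliExt hrel
  invFun := kleisliExtOfEnrichedBind hrel
  left_inv S := by
    ext Γ X Y f
    exact uncurry_curry_comp_kleisliBind S f
  right_inv B := by
    ext X Y
    change curry adj (T₀ X) (uncurry adj (T₀ X) (curry adj X _ ≫ B.bind X Y)) = B.bind X Y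
    rw [curry_uncurry, curry_counit, Category.id_comp]

end Monad

section Morphism

variable {adj : ∀ X : C, act.flip.obj X ⊣ hom.obj (op X)} {AC : ActionStr act}
  {S₀ T₀ : C → C} {ηS : ∀ X : C, X ⟶ S₀ X} {ηT : ∀ X : C, X ⟶ T₀ X}
  (MS : KleisliExt AC.toLeftAction S₀ ηS) (MT : KleisliExt AC.toLeftAction T₀ ηT)
  (τ : ∀ X : C, S₀ X ⟶ T₀ X)

variable (adj) in
lemma isStrong_iff_counit :
    (∀ (Γ : V) (X Y : C) (f : (act.obj Γ).obj X ⟶ S₀ Y),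
        MS.ext f ≫ τ Y = (act.obj Γ).map (τ X) ≫ MT.ext (f ≫ τ Y)) ↔
      ∀ X Y : C, MS.ext ((adj X).counit.app (S₀ Y)) ≫ τ Y
        = (act.obj _).map (τ X) ≫ MT.ext ((adj X).counit.app (S₀ Y) ≫ τ Y) := by
  refine ⟨fun h X Y => h _ X Y _, fun h Γ X Y f => ?_⟩
  obtain ⟨k, rfl⟩ : ∃ k, f = (act.map k).app X ≫ (adj X).counit.app (S₀ Y) :=
    ⟨curry adj X f, by rw [← uncurry_eq, uncurry_curry]⟩
  rw [MS.natural, Category.assoc, h, ← (act.map k).naturality_assoc, Category.assoc, MT.natural]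

lemma uncurry_kleisliBind_comp_map (X Y : C) :
    uncurry adj (S₀ X) (kleisliBind adj MS X Y ≫ (hom.obj (op (S₀ X))).map (τ Y))
      = MS.ext ((adj X).counit.app (S₀ Y)) ≫ τ Y := by
  rw [uncurry_comp_right, uncurry_kleisliBind]

lemma uncurry_map_comp_kleisliBind_comp_hom_map_op {EC : EnrichmentStr hom}
    (hrel : EnrRelated act hom adj AC EC) (X Y : C) :
    uncurry adj (S₀ X) ((hom.obj (op X)).map (τ Y) ≫ kleisliBind adj MT X Y
        ≫ (hom.map (τ X).op).app (T₀ Y))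
      = (act.obj _).map (τ X) ≫ MT.ext ((adj X).counit.app (S₀ Y) ≫ τ Y) := by
  rw [← Category.assoc, uncurry_comp_hom_map_op hrel, uncurry_comp_left, uncurry_kleisliBind,
    ← MT.natural, act_map_hom_map_comp_counit]

lemma isStrong_iff_isEnriched {EC : EnrichmentStr hom} (hrel : EnrRelated act hom adj AC EC) :
    (∀ (Γ : V) (X Y : C) (f : (act.obj Γ).obj X ⟶ S₀ Y),
        MS.ext f ≫ τ Y = (act.obj Γ).map (τ X) ≫ MT.ext (f ≫ τ Y)) ↔
      ∀ X Y : C, kleisliBind adj MS X Y ≫ (hom.obj (op (S₀ X))).map (τ Y)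
        = (hom.obj (op X)).map (τ Y) ≫ kleisliBind adj MT X Y ≫ (hom.map (τ X).op).app (T₀ Y) := by
  rw [isStrong_iff_counit adj]
  refine forall₂_congr fun X Y => ?_
  rw [← (uncurry_injective adj (S₀ X)).eq_iff, uncurry_kleisliBind_comp_map,
    uncurry_map_comp_kleisliBind_comp_hom_map_op MT τ hrel]

end Morphism

end ActionEnrichment

theorem statement15_general
    (act : V ⥤ C ⥤ C) (hom : Cᵒᵖ ⥤ C ⥤ V)
    (adj : ∀ X : C, act.flip.obj X ⊣ hom.obj (op X))
    (AC : ActionStr act) (EC : EnrichmentStr hom)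
    (hrel : EnrRelated act hom adj AC EC) :
    ∃ e : ∀ (T₀ : C → C) (η₀ : ∀ X : C, X ⟶ T₀ X),
        KleisliExt AC.toLeftAction T₀ η₀ ≃ EnrichedBind EC T₀ η₀,
      (∀ (T₀ : C → C) (η₀ : ∀ X : C, X ⟶ T₀ X)
          (S : KleisliExt AC.toLeftAction T₀ η₀) (X Y : C),
        (e T₀ η₀ S).bind X Y
          = (adj (T₀ X)).homEquiv _ _ (S.ext ((adj X).counit.app (T₀ Y)))) ∧
      (∀ (S₀ : C → C) (ηS : ∀ X : C, X ⟶ S₀ X)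
          (T₀ : C → C) (ηT : ∀ X : C, X ⟶ T₀ X)
          (MS : KleisliExt AC.toLeftAction S₀ ηS)
          (MT : KleisliExt AC.toLeftAction T₀ ηT)
          (τ : ∀ X : C, S₀ X ⟶ T₀ X),
        (∀ X : C, ηS X ≫ τ X = ηT X) →
        ((∀ (Γ : V) (X Y : C) (f : AC.toLeftAction.act Γ X ⟶ S₀ Y),
            MS.ext f ≫ τ Y
              = AC.toLeftAction.actMap Γ (τ X) ≫ MT.ext (f ≫ τ Y)) ↔
          (∀ X Y : C,
            (e S₀ ηS MS).bind X Y ≫ (hom.obj (op (S₀ X))).map (τ Y)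
              = (hom.obj (op X)).map (τ Y) ≫ (e T₀ ηT MT).bind X Y
                  ≫ (hom.map (τ X).op).app (T₀ Y)))) :=
  ⟨fun _ _ => ActionEnrichment.kleisliExtEquivEnrichedBind hrel, fun _ _ _ _ _ => rfl,
    fun _ _ _ _ MS MT τ _ => ActionEnrichment.isStrong_iff_isEnriched MS MT τ hrel⟩

/-- under the correspondence between actions and enrichments,
strong monads on `C` are in bijection with enriched monads on `C`, preserving
the underlying data `(T₀, η₀)` (hence the underlying ordinary monads), via the
canonical bijection sending the Kleisli extension `♯` to
`bind = ((counit)♯)^t`; and a monad morphism is strong iff it is enriched. -/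
theorem statement15
    (act : V ⥤ C ⥤ C) (hom : Cᵒᵖ ⥤ C ⥤ V)
    (adj : ∀ X : C, act.flip.obj X ⊣ hom.obj (op X))
    (ih : V → V ⥤ V) (adjT : ∀ Γ : V, tensorRight Γ ⊣ ih Γ)
    (AC : ActionStr act) (EC : EnrichmentStr hom)
    (hrel : EnrRelated act hom adj AC EC) :
    ∃ e : ∀ (T₀ : C → C) (η₀ : ∀ X : C, X ⟶ T₀ X),
        KleisliExt AC.toLeftAction T₀ η₀ ≃ EnrichedBind EC T₀ η₀,
      (∀ (T₀ : C → C) (η₀ : ∀ X : C, X ⟶ T₀ X)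
          (S : KleisliExt AC.toLeftAction T₀ η₀) (X Y : C),
        (e T₀ η₀ S).bind X Y
          = (adj (T₀ X)).homEquiv _ _ (S.ext ((adj X).counit.app (T₀ Y)))) ∧
      (∀ (S₀ : C → C) (ηS : ∀ X : C, X ⟶ S₀ X)
          (T₀ : C → C) (ηT : ∀ X : C, X ⟶ T₀ X)
          (MS : KleisliExt AC.toLeftAction S₀ ηS)
          (MT : KleisliExt AC.toLeftAction T₀ ηT)
          (τ : ∀ X : C, S₀ X ⟶ T₀ X),
        (∀ X : C, ηS X ≫ τ X = ηT X) →
        ((∀ (Γ : V) (X Y : C) (f : AC.toLeftAction.act Γ X ⟶ S₀ Y),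
            MS.ext f ≫ τ Y
              = AC.toLeftAction.actMap Γ (τ X) ≫ MT.ext (f ≫ τ Y)) ↔
          (∀ X Y : C,
            (e S₀ ηS MS).bind X Y ≫ (hom.obj (op (S₀ X))).map (τ Y)
              = (hom.obj (op X)).map (τ Y) ≫ (e T₀ ηT MT).bind X Y
                  ≫ (hom.map (τ X).op).app (T₀ Y)))) :=
  statement15_general act hom adj AC EC hrel
end

section
/- If F is a powered endofunctor on a category C powered over V, and T is the algebraically free monad on the underlying ordinary functor of F, then T carries a canonical powered monad structure, obtained by lifting the powering ⋔ to the category of F-algebras via Γ ⋔_F (A, a) = (Γ ⋔ A, (Γ ⋔ a) ∘ F⟨Γ⟩ id_{Γ⋔A}) and transporting it to the Eilenberg–Moore category of T along the isomorphism F-Alg ≅ C^T. -/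
/-!
Since `F` is powered, `Γ ⋔ A` carries the `F`-algebra structure `(Γ ⋔ a) ∘ F⟨Γ⟩ 𝟙`; the
naturality of `F⟨Γ⟩` in its argument and in `Γ`, and its compatibility with `i` and `p`, make
`Γ ⋔ f`, the reindexings `u ⋔ A`, `i` and `p` morphisms of `F`-algebras. Through
`F-Alg ≅ C^T` this lifts `⋔` to `T`-algebras, and any such lifting makes `T` a powered monad:
the extension of `f : X ⟶ Γ ⋔ T Y` is `T f` followed by the algebra structure of `Γ ⋔ T Y`.
-/

open CategoryTheory MonoidalCategory

universe v₁ v₂ v₃ u₁ u₂ u₃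

open Opposite

/-- A powering of `C` over the monoidal category `V`: a functor
`⋔ : Vᵒᵖ × C ⥤ C` with natural isomorphisms `i : X ≅ I ⋔ X` and
`p : Γ ⋔ (Γ' ⋔ X) ≅ (Γ' ⊗ Γ) ⋔ X` satisfying the coherence laws. -/
structure Powering (V : Type u₁) [Category.{v₁} V] [MonoidalCategory V]
    (C : Type u₂) [Category.{v₂} C] where
  P : Vᵒᵖ ⥤ C ⥤ C
  i : ∀ X : C, X ≅ (P.obj (op (𝟙_ V))).obj X
  i_natural : ∀ {X Y : C} (f : X ⟶ Y),
    f ≫ (i Y).hom = (i X).hom ≫ (P.obj (op (𝟙_ V))).map f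
  p : ∀ (Γ Γ' : V) (X : C),
    (P.obj (op Γ)).obj ((P.obj (op Γ')).obj X) ≅ (P.obj (op (Γ' ⊗ Γ))).obj X
  p_natural_obj : ∀ (Γ Γ' : V) {X Y : C} (f : X ⟶ Y),
    (P.obj (op Γ)).map ((P.obj (op Γ')).map f) ≫ (p Γ Γ' Y).hom
      = (p Γ Γ' X).hom ≫ (P.obj (op (Γ' ⊗ Γ))).map f
  p_natural_ctx : ∀ {Γ Δ Γ' Δ' : V} (u : Γ ⟶ Δ) (v : Γ' ⟶ Δ') (X : C),
    (P.obj (op Δ)).map ((P.map v.op).app X)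
        ≫ (P.map u.op).app ((P.obj (op Γ')).obj X) ≫ (p Γ Γ' X).hom
      = (p Δ Δ' X).hom ≫ (P.map (v ⊗ₘ u).op).app X
  coh_unit_inner : ∀ (Γ : V) (X : C),
    (P.obj (op Γ)).map (i X).hom ≫ (p Γ (𝟙_ V) X).hom
      = (P.map (λ_ Γ).hom.op).app X
  coh_unit_outer : ∀ (Γ : V) (X : C),
    (i ((P.obj (op Γ)).obj X)).hom ≫ (p (𝟙_ V) Γ X).hom
      = (P.map (ρ_ Γ).hom.op).app X
  coh_pentagon : ∀ (Γ₁ Γ₂ Γ₃ : V) (X : C),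
    (P.obj (op Γ₃)).map (p Γ₂ Γ₁ X).hom ≫ (p Γ₃ (Γ₁ ⊗ Γ₂) X).hom
      = (p Γ₃ Γ₂ ((P.obj (op Γ₁)).obj X)).hom ≫ (p (Γ₂ ⊗ Γ₃) Γ₁ X).hom
          ≫ (P.map (α_ Γ₁ Γ₂ Γ₃).hom.op).app X

/-- A powered functor structure on an object assignment `obj : C → D`:
operations sending `f : X ⟶ Γ ⋔ Y` to `F⟨Γ⟩f : F X ⟶ Γ ⋔ F Y`, natural in
`Γ` and compatible with `i` and `p`. -/
structure PoweredFunctorStr {V : Type u₁} [Category.{v₁} V] [MonoidalCategory V]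
    {C : Type u₂} [Category.{v₂} C] {D : Type u₃} [Category.{v₃} D]
    (pC : Powering V C) (pD : Powering V D) (obj : C → D) where
  pmap : ∀ {Γ : V} {X Y : C},
    (X ⟶ (pC.P.obj (op Γ)).obj Y) → (obj X ⟶ (pD.P.obj (op Γ)).obj (obj Y))
  natural : ∀ {Γ Δ : V} (u : Γ ⟶ Δ) {X Y : C}
      (f : X ⟶ (pC.P.obj (op Δ)).obj Y),
    pmap (f ≫ (pC.P.map u.op).app Y) = pmap f ≫ (pD.P.map u.op).app (obj Y)
  unit : ∀ X : C, pmap (pC.i X).hom = (pD.i (obj X)).hom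
  comp : ∀ {Γ Γ' : V} {X Y Z : C}
      (f : X ⟶ (pC.P.obj (op Γ)).obj Y) (g : Y ⟶ (pC.P.obj (op Γ')).obj Z),
    pmap (f ≫ (pC.P.obj (op Γ)).map g ≫ (pC.p Γ Γ' Z).hom)
      = pmap f ≫ (pD.P.obj (op Γ)).map (pmap g) ≫ (pD.p Γ Γ' (obj Z)).hom

/-- Powered naturality of `τ : F ⟶ G` with respect to powered functor
structures on `F` and `G`. -/
def IsPoweredNatTrans {V : Type u₁} [Category.{v₁} V] [MonoidalCategory V]
    {C : Type u₂} [Category.{v₂} C] {D : Type u₃} [Category.{v₃} D]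
    {pC : Powering V C} {pD : Powering V D} {F G : C ⥤ D}
    (SF : PoweredFunctorStr pC pD F.obj) (SG : PoweredFunctorStr pC pD G.obj)
    (τ : F ⟶ G) : Prop :=
  ∀ {Γ : V} {X Y : C} (f : X ⟶ (pC.P.obj (op Γ)).obj Y),
    SF.pmap f ≫ (pD.P.obj (op Γ)).map (τ.app Y) = τ.app X ≫ SG.pmap f
variable {V : Type u₁} [Category.{v₁} V] [MonoidalCategory V]
variable {C : Type u₂} [Category.{v₂} C]

/-- A powered monad structure over the underlying data of a monad `T`, with
respect to a powering of `C` over `V`. -/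
structure PoweredMonadStr (pw : Powering V C) (T : Monad C) where
  pext : ∀ {Γ : V} {X Y : C},
    (X ⟶ (pw.P.obj (op Γ)).obj (T.obj Y)) →
      (T.obj X ⟶ (pw.P.obj (op Γ)).obj (T.obj Y))
  natural : ∀ {Γ Δ : V} (u : Γ ⟶ Δ) {X Y : C}
      (f : X ⟶ (pw.P.obj (op Δ)).obj (T.obj Y)),
    pext (f ≫ (pw.P.map u.op).app (T.obj Y))
      = pext f ≫ (pw.P.map u.op).app (T.obj Y)
  law_unit : ∀ X : C,
    pext (T.η.app X ≫ (pw.i (T.obj X)).hom) = (pw.i (T.obj X)).hom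
  law_pext_unit : ∀ {Γ : V} {X Y : C}
      (f : X ⟶ (pw.P.obj (op Γ)).obj (T.obj Y)),
    T.η.app X ≫ pext f = f
  law_assoc : ∀ {Γ Γ' : V} {X Y Z : C}
      (f : X ⟶ (pw.P.obj (op Γ)).obj (T.obj Y))
      (g : Y ⟶ (pw.P.obj (op Γ')).obj (T.obj Z)),
    pext f ≫ (pw.P.obj (op Γ)).map (pext g) ≫ (pw.p Γ Γ' (T.obj Z)).hom
      = pext (f ≫ (pw.P.obj (op Γ)).map (pext g) ≫ (pw.p Γ Γ' (T.obj Z)).hom)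

/-- The underlying ordinary monad of the powered monad structure `S` is `T`
itself. -/
def PoweredMonadStr.Underlies {pw : Powering V C} {T : Monad C}
    (S : PoweredMonadStr pw T) : Prop :=
  (∀ {X Y : C} (f : X ⟶ Y),
    T.map f
      = S.pext (f ≫ T.η.app Y ≫ (pw.i (T.obj Y)).hom) ≫ (pw.i (T.obj Y)).inv) ∧
  (∀ X : C,
    T.μ.app X = S.pext ((pw.i (T.obj X)).hom) ≫ (pw.i (T.obj X)).inv)

/-- A lifting of the powering of `C` over `V` to the Eilenberg–Moore category
of `T`. -/
structure EMLifting (pw : Powering V C) (T : Monad C) where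
  L : Powering V (T.Algebra)
  forget_comm :
    L.P ⋙ (Functor.whiskeringRight T.Algebra T.Algebra C).obj T.forget
      = pw.P ⋙ (Functor.whiskeringLeft T.Algebra C C).obj T.forget

namespace PoweredFunctorStr

section

variable {D : Type u₃} [Category.{v₃} D] {pC : Powering V C} {pD : Powering V D} {F : C ⥤ D}

def Underlies (PF : PoweredFunctorStr pC pD F.obj) : Prop :=
  ∀ ⦃X Y : C⦄ (f : X ⟶ Y), PF.pmap (f ≫ (pC.i Y).hom) = F.map f ≫ (pD.i (F.obj Y)).hom

variable {PF : PoweredFunctorStr pC pD F.obj}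

theorem pmap_precomp (hPF : PF.Underlies) {Γ : V} {X' X Y : C} (g : X' ⟶ X)
    (f : X ⟶ (pC.P.obj (op Γ)).obj Y) : PF.pmap (g ≫ f) = F.map g ≫ PF.pmap f := by
  rw [← cancel_mono ((pD.P.map (ρ_ Γ).hom.op).app (F.obj Y))]
  have h1 := PF.comp (g ≫ (pC.i X).hom) f
  have h2 : (g ≫ (pC.i X).hom) ≫ (pC.P.obj (op (𝟙_ V))).map f ≫ (pC.p (𝟙_ V) Γ Y).hom
      = (g ≫ f) ≫ (pC.P.map (ρ_ Γ).hom.op).app Y := by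
    rw [← pC.coh_unit_outer Γ Y]
    slice_lhs 2 3 => rw [← pC.i_natural f]
    simp
  rw [h2, PF.natural (ρ_ Γ).hom (g ≫ f), hPF g] at h1
  rw [h1, ← pD.coh_unit_outer Γ (F.obj Y)]
  slice_lhs 2 3 => rw [← pD.i_natural (PF.pmap f)]
  simp

theorem pmap_postcomp (hPF : PF.Underlies) {Γ : V} {X Y Y' : C}
    (f : X ⟶ (pC.P.obj (op Γ)).obj Y) (g : Y ⟶ Y') :
    PF.pmap (f ≫ (pC.P.obj (op Γ)).map g) = PF.pmap f ≫ (pD.P.obj (op Γ)).map (F.map g) := by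
  rw [← cancel_mono ((pD.P.map (λ_ Γ).hom.op).app (F.obj Y'))]
  have h1 := PF.comp f (g ≫ (pC.i Y').hom)
  have h2 : f ≫ (pC.P.obj (op Γ)).map (g ≫ (pC.i Y').hom) ≫ (pC.p Γ (𝟙_ V) Y').hom
      = (f ≫ (pC.P.obj (op Γ)).map g) ≫ (pC.P.map (λ_ Γ).hom.op).app Y' := by
    rw [← pC.coh_unit_inner Γ Y']
    simp
  rw [h2, PF.natural (λ_ Γ).hom (f ≫ (pC.P.obj (op Γ)).map g), hPF g] at h1
  rw [h1, ← pD.coh_unit_inner Γ (F.obj Y')]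
  simp

end

section

variable {pw : Powering V C} {F : C ⥤ C} (PF : PoweredFunctorStr pw pw F.obj)

def powerAlg (Γ : V) (A : Endofunctor.Algebra F) : Endofunctor.Algebra F :=
  ⟨(pw.P.obj (op Γ)).obj A.a,
    PF.pmap (𝟙 ((pw.P.obj (op Γ)).obj A.a)) ≫ (pw.P.obj (op Γ)).map A.str⟩

variable {PF} (hPF : PF.Underlies)
include hPF

theorem map_comp_pmap_id {Γ : V} {X Y : C} (g : X ⟶ (pw.P.obj (op Γ)).obj Y) :
    F.map g ≫ PF.pmap (𝟙 _) = PF.pmap g := by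
  rw [← pmap_precomp hPF, Category.comp_id]

def powerAlgMap (Γ : V) {A B : Endofunctor.Algebra F} (h : A ⟶ B) :
    PF.powerAlg Γ A ⟶ PF.powerAlg Γ B where
  f := (pw.P.obj (op Γ)).map h.f
  h := by
    have hpost := pmap_postcomp hPF (𝟙 ((pw.P.obj (op Γ)).obj A.a)) h.f
    rw [Category.id_comp] at hpost
    simp only [powerAlg]
    rw [← Category.assoc, map_comp_pmap_id hPF, hpost, Category.assoc, ← Functor.map_comp, h.h,
      Functor.map_comp, Category.assoc]

def powerAlgCtx {Γ Δ : V} (u : Γ ⟶ Δ) (A : Endofunctor.Algebra F) :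
    PF.powerAlg Δ A ⟶ PF.powerAlg Γ A where
  f := (pw.P.map u.op).app A.a
  h := by
    have hnat := PF.natural u (𝟙 ((pw.P.obj (op Δ)).obj A.a))
    rw [Category.id_comp] at hnat
    simp only [powerAlg]
    rw [← Category.assoc, map_comp_pmap_id hPF, hnat, Category.assoc, Category.assoc,
      NatTrans.naturality]

def powerAlgI (A : Endofunctor.Algebra F) : A ⟶ PF.powerAlg (𝟙_ V) A where
  f := (pw.i A.a).hom
  h := by
    have hunit := hPF (𝟙 A.a)
    rw [Category.id_comp, F.map_id, Category.id_comp] at hunit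
    simp only [powerAlg]
    rw [← Category.assoc, map_comp_pmap_id hPF, hunit, pw.i_natural]

def powerAlgP (Γ Γ' : V) (A : Endofunctor.Algebra F) :
    PF.powerAlg Γ (PF.powerAlg Γ' A) ⟶ PF.powerAlg (Γ' ⊗ Γ) A where
  f := (pw.p Γ Γ' A.a).hom
  h := by
    have hcomp := PF.comp (𝟙 ((pw.P.obj (op Γ)).obj ((pw.P.obj (op Γ')).obj A.a)))
      (𝟙 ((pw.P.obj (op Γ')).obj A.a))
    rw [CategoryTheory.Functor.map_id, Category.id_comp, Category.id_comp] at hcomp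
    simp only [powerAlg]
    rw [← Category.assoc, map_comp_pmap_id hPF, hcomp]
    simp only [Functor.map_comp, Category.assoc]
    rw [pw.p_natural_obj]

end

end PoweredFunctorStr

/-- A lifting of the powering to `T`-algebras in which `Γ ⋔ X` has carrier `Γ ⋔ X.A` on the
nose, given by the `T`-algebra structures on the powers. -/
structure StrictEMLifting (pw : Powering V C) (T : Monad C) where
  str : ∀ (Γ : V) (X : T.Algebra),
    T.obj ((pw.P.obj (op Γ)).obj X.A) ⟶ (pw.P.obj (op Γ)).obj X.A
  unit : ∀ (Γ : V) (X : T.Algebra), T.η.app _ ≫ str Γ X = 𝟙 _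
  assoc : ∀ (Γ : V) (X : T.Algebra), T.μ.app _ ≫ str Γ X = T.map (str Γ X) ≫ str Γ X
  map_comm : ∀ (Γ : V) {X Y : T.Algebra} (f : X ⟶ Y),
    T.map ((pw.P.obj (op Γ)).map f.f) ≫ str Γ Y = str Γ X ≫ (pw.P.obj (op Γ)).map f.f
  ctx_comm : ∀ {Γ Δ : V} (u : Γ ⟶ Δ) (X : T.Algebra),
    T.map ((pw.P.map u.op).app X.A) ≫ str Γ X = str Δ X ≫ (pw.P.map u.op).app X.A
  i_comm : ∀ X : T.Algebra, T.map (pw.i X.A).hom ≫ str (𝟙_ V) X = X.a ≫ (pw.i X.A).hom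
  p_comm : ∀ (Γ Γ' : V) (X : T.Algebra),
    T.map (pw.p Γ Γ' X.A).hom ≫ str (Γ' ⊗ Γ) X
      = str Γ ⟨_, str Γ' X, unit Γ' X, assoc Γ' X⟩ ≫ (pw.p Γ Γ' X.A).hom

namespace StrictEMLifting

variable {pw : Powering V C} {T : Monad C} (L : StrictEMLifting pw T)

def alg (Γ : V) (X : T.Algebra) : T.Algebra := ⟨_, L.str Γ X, L.unit Γ X, L.assoc Γ X⟩

def toEMLifting : EMLifting pw T where
  L :=
  { P :=
    { obj Γ :=
      { obj X := L.alg Γ.unop X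
        map f := ⟨(pw.P.obj Γ).map f.f, L.map_comm Γ.unop f⟩
        map_id X := by ext; exact (pw.P.obj Γ).map_id X.A
        map_comp f g := by ext; exact (pw.P.obj Γ).map_comp f.f g.f }
      map w :=
      { app X := ⟨(pw.P.map w).app X.A, L.ctx_comm w.unop X⟩
        naturality _ _ f := by ext; exact (pw.P.map w).naturality f.f }
      map_id Γ := by ext X; exact congr_fun (congrArg NatTrans.app (pw.P.map_id Γ)) X.A
      map_comp u v := by
        ext X; exact congr_fun (congrArg NatTrans.app (pw.P.map_comp u v)) X.A }
    i X := Monad.Algebra.isoMk (pw.i X.A) (L.i_comm X)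
    i_natural f := by ext; exact pw.i_natural f.f
    p Γ Γ' X := Monad.Algebra.isoMk (pw.p Γ Γ' X.A) (L.p_comm Γ Γ' X)
    p_natural_obj Γ Γ' _ _ f := by ext; exact pw.p_natural_obj Γ Γ' f.f
    p_natural_ctx u v X := by ext; exact pw.p_natural_ctx u v X.A
    coh_unit_inner Γ X := by ext; exact pw.coh_unit_inner Γ X.A
    coh_unit_outer Γ X := by ext; exact pw.coh_unit_outer Γ X.A
    coh_pentagon Γ₁ Γ₂ Γ₃ X := by ext; exact pw.coh_pentagon Γ₁ Γ₂ Γ₃ X.A }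
  forget_comm := rfl

def freeStr (Γ : V) (Y : C) :
    T.obj ((pw.P.obj (op Γ)).obj (T.obj Y)) ⟶ (pw.P.obj (op Γ)).obj (T.obj Y) :=
  L.str Γ (T.free.obj Y)

theorem freeStr_i (Y : C) :
    T.map (pw.i (T.obj Y)).hom ≫ L.freeStr (𝟙_ V) Y = T.μ.app Y ≫ (pw.i (T.obj Y)).hom :=
  L.i_comm (T.free.obj Y)

def kext {Γ : V} {X Y : C} (f : X ⟶ (pw.P.obj (op Γ)).obj (T.obj Y)) :
    T.obj X ⟶ (pw.P.obj (op Γ)).obj (T.obj Y) :=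
  T.map f ≫ L.freeStr Γ Y

theorem kext_comm {Γ : V} {X Y : C} (f : X ⟶ (pw.P.obj (op Γ)).obj (T.obj Y)) :
    T.map (L.kext f) ≫ L.freeStr Γ Y = T.μ.app X ≫ L.kext f := by
  have hassoc : T.μ.app _ ≫ L.freeStr Γ Y = T.map (L.freeStr Γ Y) ≫ L.freeStr Γ Y :=
    L.assoc Γ (T.free.obj Y)
  rw [kext, Functor.map_comp, Category.assoc, ← hassoc, ← T.μ.naturality_assoc]
  rfl

def poweredMonadStr : PoweredMonadStr pw T where
  pext := L.kext
  natural {Γ Δ} u {X Y} f := by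
    have hctx : T.map ((pw.P.map u.op).app (T.obj Y)) ≫ L.freeStr _ Y
        = L.freeStr _ Y ≫ (pw.P.map u.op).app (T.obj Y) :=
      L.ctx_comm u (T.free.obj Y)
    rw [kext, kext, Functor.map_comp, Category.assoc, hctx, Category.assoc]
  law_unit X := by
    rw [kext, Functor.map_comp, Category.assoc, freeStr_i, ← Category.assoc, Monad.right_unit,
      Category.id_comp]
  law_pext_unit {Γ X Y} f := by
    have hunit : T.η.app _ ≫ L.freeStr Γ Y = 𝟙 _ := L.unit Γ (T.free.obj Y)
    rw [kext, ← Category.assoc, ← T.η.naturality, Functor.id_map, Category.assoc, hunit,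
      Category.comp_id]
  law_assoc {Γ Γ' X Y Z} f g := by
    have hmap : T.map ((pw.P.obj (op Γ)).map (L.kext g)) ≫ L.str Γ (L.alg Γ' (T.free.obj Z))
        = L.freeStr Γ Y ≫ (pw.P.obj (op Γ)).map (L.kext g) :=
      L.map_comm Γ (X := T.free.obj Y) (Y := L.alg Γ' (T.free.obj Z)) ⟨L.kext g, L.kext_comm g⟩
    have hp : T.map (pw.p Γ Γ' (T.obj Z)).hom ≫ L.freeStr (Γ' ⊗ Γ) Z
        = L.str Γ (L.alg Γ' (T.free.obj Z)) ≫ (pw.p Γ Γ' (T.obj Z)).hom :=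
      L.p_comm Γ Γ' (T.free.obj Z)
    have key : T.map ((pw.P.obj (op Γ)).map (L.kext g) ≫ (pw.p Γ Γ' (T.obj Z)).hom)
          ≫ L.freeStr (Γ' ⊗ Γ) Z
        = L.freeStr Γ Y ≫ (pw.P.obj (op Γ)).map (L.kext g) ≫ (pw.p Γ Γ' (T.obj Z)).hom :=
      calc _ = T.map ((pw.P.obj (op Γ)).map (L.kext g))
              ≫ T.map (pw.p Γ Γ' (T.obj Z)).hom ≫ L.freeStr (Γ' ⊗ Γ) Z := by
            rw [Functor.map_comp, Category.assoc]
        _ = (T.map ((pw.P.obj (op Γ)).map (L.kext g)) ≫ L.str Γ (L.alg Γ' (T.free.obj Z)))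
              ≫ (pw.p Γ Γ' (T.obj Z)).hom := by
            rw [hp]; exact (Category.assoc _ _ _).symm
        _ = _ := (congrArg (· ≫ _) hmap).trans (Category.assoc _ _ _)
    change (T.map f ≫ L.freeStr Γ Y) ≫ _ = T.map (f ≫ _) ≫ L.freeStr (Γ' ⊗ Γ) Z
    rw [Functor.map_comp, Category.assoc, Category.assoc, key]

theorem map_eq_kext {X Y : C} (f : X ⟶ Y) :
    T.map f = L.kext (f ≫ T.η.app Y ≫ (pw.i (T.obj Y)).hom) ≫ (pw.i (T.obj Y)).inv := by
  simp [kext, reassoc_of% L.freeStr_i Y]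

theorem μ_eq_kext (X : C) : T.μ.app X = L.kext (pw.i (T.obj X)).hom ≫ (pw.i (T.obj X)).inv := by
  simp [kext, reassoc_of% L.freeStr_i X]

theorem poweredMonadStr_underlies : L.poweredMonadStr.Underlies :=
  ⟨fun f => L.map_eq_kext f, L.μ_eq_kext⟩

end StrictEMLifting

namespace CategoryTheory

def Monad.Algebra.copy {T : Monad C} (B : T.Algebra) {A : C} (e : B.A = A) : T.Algebra where
  A := A
  a := T.map (eqToHom e.symm) ≫ B.a ≫ eqToHom e
  unit := by subst e; simpa using B.unit
  assoc := by subst e; simpa using B.assoc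

theorem Monad.Algebra.copy_eq {T : Monad C} (B : T.Algebra) {A : C} (e : B.A = A) :
    B.copy e = B := by
  subst e; cases B; simp [Monad.Algebra.copy]

def Endofunctor.Algebra.copy {F : C ⥤ C} (M : Endofunctor.Algebra F) {A : C} (e : M.a = A) :
    Endofunctor.Algebra F :=
  ⟨A, F.map (eqToHom e.symm) ≫ M.str ≫ eqToHom e⟩

theorem Endofunctor.Algebra.copy_eq {F : C ⥤ C} (M : Endofunctor.Algebra F) {A : C}
    (e : M.a = A) : M.copy e = M := by
  subst e; cases M; simp [Endofunctor.Algebra.copy]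

theorem Endofunctor.Algebra.copy_comm_iff {F : C ⥤ C} {M N : Endofunctor.Algebra F} {A B : C}
    (eM : M.a = A) (eN : N.a = B) (g : A ⟶ B) :
    F.map g ≫ (N.copy eN).str = (M.copy eM).str ≫ g ↔
      F.map (eqToHom eM ≫ g ≫ eqToHom eN.symm) ≫ N.str
        = M.str ≫ eqToHom eM ≫ g ≫ eqToHom eN.symm := by
  subst eM eN; simp [Endofunctor.Algebra.copy]

end CategoryTheory

structure AlgebraicallyFree (T : Monad C) (F : C ⥤ C) where
  functor : T.Algebra ⥤ Endofunctor.Algebra F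
  inverse : Endofunctor.Algebra F ⥤ T.Algebra
  functor_inverse : functor ⋙ inverse = 𝟭 _
  inverse_functor : inverse ⋙ functor = 𝟭 _
  functor_forget : functor ⋙ Endofunctor.Algebra.forget F = T.forget

namespace AlgebraicallyFree

variable {T : Monad C} {F : C ⥤ C} (E : AlgebraicallyFree T F)

def toEquivalence : T.Algebra ≌ Endofunctor.Algebra F :=
  .mk E.functor E.inverse (eqToIso E.functor_inverse.symm) (eqToIso E.inverse_functor)

theorem functor_obj_a (X : T.Algebra) : (E.functor.obj X).a = X.A :=
  Functor.congr_obj E.functor_forget X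

theorem inverse_obj_A (M : Endofunctor.Algebra F) : (E.inverse.obj M).A = M.a :=
  (E.functor_obj_a _).symm.trans (congrArg (·.a) (Functor.congr_obj E.inverse_functor M))

/- `E` preserves carriers only up to propositional equality; copying makes them definitional, so
that the lifted powering commutes with the forgetful functors by `rfl`. -/
def endoAlg (X : T.Algebra) : Endofunctor.Algebra F := (E.functor.obj X).copy (E.functor_obj_a X)

def monadAlg (M : Endofunctor.Algebra F) : T.Algebra := (E.inverse.obj M).copy (E.inverse_obj_A M)

theorem monadAlg_eq (M : Endofunctor.Algebra F) : E.monadAlg M = E.inverse.obj M :=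
  Monad.Algebra.copy_eq _ _

theorem endoAlg_inverse_obj (M : Endofunctor.Algebra F) : E.endoAlg (E.inverse.obj M) = M :=
  (Endofunctor.Algebra.copy_eq _ _).trans (Functor.congr_obj E.inverse_functor M)

theorem endoAlg_monadAlg (M : Endofunctor.Algebra F) : E.endoAlg (E.monadAlg M) = M := by
  rw [monadAlg_eq, endoAlg_inverse_obj]

theorem endoAlg_monadAlg_str (M : Endofunctor.Algebra F) :
    (E.endoAlg (E.monadAlg M)).str = M.str :=
  eq_of_heq (congr_arg_heq Endofunctor.Algebra.str (E.endoAlg_monadAlg M))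

theorem hom_comm_iff {X Y : T.Algebra} (g : X.A ⟶ Y.A) :
    T.map g ≫ Y.a = X.a ≫ g ↔ F.map g ≫ (E.endoAlg Y).str = (E.endoAlg X).str ≫ g := by
  dsimp only [endoAlg]
  rw [Endofunctor.Algebra.copy_comm_iff]
  constructor
  · intro hg
    have hf : (E.functor.map ⟨g, hg⟩).f
        = eqToHom (E.functor_obj_a X) ≫ g ≫ eqToHom (E.functor_obj_a Y).symm :=
      Functor.congr_hom E.functor_forget _
    rw [← hf]
    exact (E.functor.map _).h
  · intro hg
    let f := E.toEquivalence.fullyFaithfulFunctor.preimage ⟨_, hg⟩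
    have hf : (E.functor.map f).f
        = eqToHom (E.functor_obj_a X) ≫ f.f ≫ eqToHom (E.functor_obj_a Y).symm :=
      Functor.congr_hom E.functor_forget _
    have hmap : E.functor.map f = ⟨_, hg⟩ := E.toEquivalence.fullyFaithfulFunctor.map_preimage _
    have hfg : f.f = g := by
      rw [hmap] at hf
      exact (cancel_mono _).mp ((cancel_epi _).mp hf.symm)
    rw [← hfg]
    exact f.h

end AlgebraicallyFree

namespace PoweredFunctorStr

variable {pw : Powering V C} {F : C ⥤ C} {PF : PoweredFunctorStr pw pw F.obj} {T : Monad C}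

def strictEMLifting (hPF : PF.Underlies) (E : AlgebraicallyFree T F) : StrictEMLifting pw T where
  str Γ X := (E.monadAlg (PF.powerAlg Γ (E.endoAlg X))).a
  unit Γ X := (E.monadAlg (PF.powerAlg Γ (E.endoAlg X))).unit
  assoc Γ X := (E.monadAlg (PF.powerAlg Γ (E.endoAlg X))).assoc
  map_comm Γ X Y f := by
    refine (E.hom_comm_iff (X := E.monadAlg (PF.powerAlg Γ (E.endoAlg X)))
      (Y := E.monadAlg (PF.powerAlg Γ (E.endoAlg Y))) _).mpr ?_
    rw [E.endoAlg_monadAlg_str, E.endoAlg_monadAlg_str]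
    let f' : E.endoAlg X ⟶ E.endoAlg Y := ⟨f.f, (E.hom_comm_iff f.f).mp f.h⟩
    exact (powerAlgMap hPF Γ f').h
  ctx_comm {Γ Δ} u X := by
    refine (E.hom_comm_iff (X := E.monadAlg (PF.powerAlg Δ (E.endoAlg X)))
      (Y := E.monadAlg (PF.powerAlg Γ (E.endoAlg X))) _).mpr ?_
    rw [E.endoAlg_monadAlg_str, E.endoAlg_monadAlg_str]
    exact (powerAlgCtx hPF u (E.endoAlg X)).h
  i_comm X := by
    refine (E.hom_comm_iff (X := X)
      (Y := E.monadAlg (PF.powerAlg (𝟙_ V) (E.endoAlg X))) _).mpr ?_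
    rw [E.endoAlg_monadAlg_str]
    exact (powerAlgI hPF (E.endoAlg X)).h
  p_comm Γ Γ' X := by
    refine (E.hom_comm_iff (X := E.monadAlg (PF.powerAlg Γ (E.endoAlg
      (E.monadAlg (PF.powerAlg Γ' (E.endoAlg X))))))
      (Y := E.monadAlg (PF.powerAlg (Γ' ⊗ Γ) (E.endoAlg X))) _).mpr ?_
    rw [E.endoAlg_monadAlg_str, E.endoAlg_monadAlg_str]
    dsimp only [powerAlg]
    rw [E.endoAlg_monadAlg_str]
    exact (powerAlgP hPF Γ Γ' (E.endoAlg X)).h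

end PoweredFunctorStr

/-- if `F₀` is a powered endofunctor on a category `C` powered
over `V` (a functor with a powered functor structure `PF` whose underlying
functor is `F₀`), and `T` is the algebraically free monad on `F₀` (there is an
isomorphism of categories `F₀-Alg ≅ C^T` commuting with the forgetful
functors), then `T` carries a powered monad structure, obtained from a lifting
of the powering to the Eilenberg–Moore category which, transported to
`F₀`-algebras, is given by `Γ ⋔_F (A, a) = (Γ ⋔ A, (Γ ⋔ a) ∘ F⟨Γ⟩ 𝟙)`. -/
theorem statement18 (pw : Powering V C) (F₀ : C ⥤ C)
    (PF : PoweredFunctorStr pw pw F₀.obj)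
    (hund : ∀ {X Y : C} (f : X ⟶ Y),
      PF.pmap (f ≫ (pw.i Y).hom) = F₀.map f ≫ (pw.i (F₀.obj Y)).hom)
    (T : Monad C)
    (Φ : T.Algebra ⥤ Endofunctor.Algebra F₀)
    (Ψ : Endofunctor.Algebra F₀ ⥤ T.Algebra)
    (hΦΨ : Φ ⋙ Ψ = 𝟭 _) (hΨΦ : Ψ ⋙ Φ = 𝟭 _)
    (hforget : Φ ⋙ Endofunctor.Algebra.forget F₀ = T.forget) :
    (∃ S : PoweredMonadStr pw T, S.Underlies) ∧
    (∃ L : EMLifting pw T,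
      ∀ (Γ : V) (A : Endofunctor.Algebra F₀),
        (L.L.P.obj (op Γ)).obj (Ψ.obj A)
          = Ψ.obj ⟨(pw.P.obj (op Γ)).obj A.a,
              PF.pmap (𝟙 ((pw.P.obj (op Γ)).obj A.a))
                ≫ (pw.P.obj (op Γ)).map A.str⟩) := by
  let E : AlgebraicallyFree T F₀ := ⟨Φ, Ψ, hΦΨ, hΨΦ, hforget⟩
  let L := PoweredFunctorStr.strictEMLifting @hund E
  refine ⟨⟨L.poweredMonadStr, L.poweredMonadStr_underlies⟩, ⟨L.toEMLifting, fun Γ A => ?_⟩⟩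
  change E.monadAlg (PF.powerAlg Γ (E.endoAlg (Ψ.obj A))) = Ψ.obj (PF.powerAlg Γ A)
  rw [E.monadAlg_eq, E.endoAlg_inverse_obj]
end
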